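/- arXiv:2409.16477 — 11 statements merged into one kernel-verified Lean document; each statement's English description precedes it below -/
import Mathlib

section
/- Let n and N be positive integers, let A be a symmetric positive definite real n×n matrix, let B be a real N×n matrix, let μ > 0 and d₁₁ > 0 be real numbers, and let D = d₁₁·e₁e₁ᵀ be the N×N matrix whose only nonzero entry is d₁₁ in position (1,1). Assume that the only vector p ∈ ℝᴺ satisfying both Bᵀp = 0 and p₁ = 0 is p = 0 (i.e., the kernel of Bᵀ contains no nonzero vector whose first component vanishes). Then the Schur complement S = μD + B A⁻¹ Bᵀ is a symmetric positive definite N×N matrix. -/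
open Matrix

/-- For a symmetric positive definite `A`, a matrix `B`, `μ > 0`, `d₁₁ > 0`,
`D = d₁₁ e₁e₁ᵀ`, assuming the kernel of `Bᵀ` contains no nonzero vector with vanishing first
component, the regularized Schur complement `S = μD + B A⁻¹ Bᵀ` is symmetric positive definite. -/
theorem regularized_schur_posDef {n N : ℕ} [NeZero n] [NeZero N]
    (A : Matrix (Fin n) (Fin n) ℝ) (hA : A.PosDef)
    (B : Matrix (Fin N) (Fin n) ℝ)
    (μ d₁₁ : ℝ) (hμ : 0 < μ) (hd : 0 < d₁₁)
    (D : Matrix (Fin N) (Fin N) ℝ) (hD : D = Matrix.single 0 0 d₁₁)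
    (hker : ∀ p : Fin N → ℝ, Bᵀ *ᵥ p = 0 → p 0 = 0 → p = 0) :
    (μ • D + B * A⁻¹ * Bᵀ).PosDef := by
  have hAinv : (A⁻¹).PosDef := hA.inv
  have hDq : ∀ x : Fin N → ℝ, x ⬝ᵥ D *ᵥ x = d₁₁ * (x 0) ^ 2 := by
    intro x
    subst hD
    simp [dotProduct, mulVec, single_apply, Finset.sum_ite_eq, ite_and]
    ring
  refine posDef_iff_dotProduct_mulVec.mpr ⟨?_, ?_⟩
  · -- Hermitian
    show _ = _
    rw [conjTranspose_eq_transpose_of_trivial, transpose_add, transpose_smul,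
      transpose_mul, transpose_mul, transpose_transpose,
      show (A⁻¹)ᵀ = A⁻¹ by
        rw [← conjTranspose_eq_transpose_of_trivial]; exact hAinv.isHermitian,
      Matrix.mul_assoc]
    congr 1
    subst hD
    ext i j
    simp [transpose_apply, single_apply, and_comm]
  · intro x hx
    have hx' : (x : Fin N → ℝ) ≠ 0 := hx
    have key : x ⬝ᵥ (B * A⁻¹ * Bᵀ) *ᵥ x = (Bᵀ *ᵥ x) ⬝ᵥ A⁻¹ *ᵥ (Bᵀ *ᵥ x) := by
      rw [← mulVec_mulVec, ← mulVec_mulVec, dotProduct_mulVec x B, ← mulVec_transpose]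
    have h2 : (0:ℝ) ≤ (Bᵀ *ᵥ x) ⬝ᵥ A⁻¹ *ᵥ (Bᵀ *ᵥ x) := hAinv.posSemidef.dotProduct_mulVec_nonneg _
    have hsum : star x ⬝ᵥ (μ • D + B * A⁻¹ * Bᵀ) *ᵥ x
        = μ * (d₁₁ * (x 0) ^ 2) + (Bᵀ *ᵥ x) ⬝ᵥ A⁻¹ *ᵥ (Bᵀ *ᵥ x) := by
      rw [show (star x : Fin N → ℝ) = x from rfl, add_mulVec, dotProduct_add, smul_mulVec,
        dotProduct_smul, key, hDq x, smul_eq_mul]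
    rw [hsum]
    by_cases hB : Bᵀ *ᵥ x = 0
    · have hx0 : x 0 ≠ 0 := fun h => hx' (hker x hB h)
      have h5 : (0:ℝ) < μ * (d₁₁ * (x 0) ^ 2) := by positivity
      linarith
    · have h3 : (0:ℝ) < (Bᵀ *ᵥ x) ⬝ᵥ A⁻¹ *ᵥ (Bᵀ *ᵥ x) := hAinv.dotProduct_mulVec_pos hB
      have h4 : (0:ℝ) ≤ μ * (d₁₁ * (x 0) ^ 2) := by positivity
      linarith
end

section
/- Let n and N be positive integers, let A be a symmetric positive definite real n×n matrix, let B be a real N×n matrix, let μ > 0 and d₁₁ > 0 be real numbers, and let D = d₁₁·e₁e₁ᵀ be the N×N matrix whose only nonzero entry is d₁₁ in position (1,1). Assume that the only vector p ∈ ℝᴺ satisfying both Bᵀp = 0 and p₁ = 0 is p = 0. Then the (n+N)×(n+N) block matrix 𝒜 = [[A, −Bᵀ],[−B, −μD]] is invertible. -/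
open Matrix

/-- With `A` symmetric positive definite, `μ > 0`, `d₁₁ > 0`,
`D = d₁₁ e₁e₁ᵀ`, and the kernel of `Bᵀ` containing no nonzero vector with vanishing first
component, the regularized saddle point matrix `𝒜 = [[A, −Bᵀ],[−B, −μD]]` is invertible. -/
theorem regularized_saddle_point_invertible {n N : ℕ} [NeZero n] [NeZero N]
    (A : Matrix (Fin n) (Fin n) ℝ) (hA : A.PosDef)
    (B : Matrix (Fin N) (Fin n) ℝ)
    (μ d₁₁ : ℝ) (hμ : 0 < μ) (hd : 0 < d₁₁)
    (D : Matrix (Fin N) (Fin N) ℝ) (hD : D = Matrix.single 0 0 d₁₁)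
    (hker : ∀ p : Fin N → ℝ, Bᵀ *ᵥ p = 0 → p 0 = 0 → p = 0) :
    IsUnit (Matrix.fromBlocks A (-Bᵀ) (-B) (-(μ • D))) := by
  rw [← Matrix.mulVec_injective_iff_isUnit]
  set M := Matrix.fromBlocks A (-Bᵀ) (-B) (-(μ • D)) with hM
  intro x y hxy
  suffices h : ∀ v : Fin n ⊕ Fin N → ℝ, M *ᵥ v = 0 → v = 0 by
    have := h (x - y) (by rw [Matrix.mulVec_sub, hxy, sub_self])
    exact sub_eq_zero.mp this
  intro v hv
  set u : Fin n → ℝ := v ∘ Sum.inl with hu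
  set p : Fin N → ℝ := v ∘ Sum.inr with hp
  have hvelim : v = Sum.elim u p := by
    funext i; cases i <;> rfl
  rw [hvelim, Matrix.fromBlocks_mulVec] at hv
  have h1 : A *ᵥ u + (-Bᵀ) *ᵥ p = 0 := by
    funext i; exact congrFun hv (Sum.inl i)
  have h2 : (-B) *ᵥ u + (-(μ • D)) *ᵥ p = 0 := by
    funext i; exact congrFun hv (Sum.inr i)
  -- dot products
  have e1 : u ⬝ᵥ (A *ᵥ u) - u ⬝ᵥ (Bᵀ *ᵥ p) = 0 := by
    have := congrArg (fun w => u ⬝ᵥ w) h1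
    simpa [Matrix.neg_mulVec, dotProduct_add, dotProduct_neg,
      sub_eq_add_neg] using this
  have e2 : - (p ⬝ᵥ (B *ᵥ u)) - μ * (p ⬝ᵥ (D *ᵥ p)) = 0 := by
    have := congrArg (fun w => p ⬝ᵥ w) h2
    simpa [Matrix.neg_mulVec, Matrix.smul_mulVec, dotProduct_add,
      dotProduct_neg, dotProduct_smul, smul_eq_mul, sub_eq_add_neg] using this
  have hsym : u ⬝ᵥ (Bᵀ *ᵥ p) = p ⬝ᵥ (B *ᵥ u) := by
    rw [Matrix.dotProduct_mulVec, Matrix.vecMul_transpose, dotProduct_comm]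
  have hDquad : p ⬝ᵥ (D *ᵥ p) = d₁₁ * (p 0 * p 0) := by
    subst hD
    simp [dotProduct, Matrix.mulVec, Matrix.single, Finset.mul_sum,
      Finset.sum_ite_eq, ite_and, mul_comm, mul_left_comm]
  have key : u ⬝ᵥ (A *ᵥ u) + μ * (d₁₁ * (p 0 * p 0)) = 0 := by
    have := congrArg₂ (· + ·) e1 e2
    simp only [hsym, hDquad] at *
    linarith
  have hAq : 0 ≤ u ⬝ᵥ (A *ᵥ u) := by
    rcases eq_or_ne u 0 with h | h
    · simp [h]
    · have := hA.dotProduct_mulVec_pos h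
      simpa using this.le
  have hpq : 0 ≤ μ * (d₁₁ * (p 0 * p 0)) := by
    have : 0 ≤ p 0 * p 0 := mul_self_nonneg _
    exact mul_nonneg hμ.le (mul_nonneg hd.le this)
  have hu0 : u = 0 := by
    by_contra h
    have := hA.dotProduct_mulVec_pos h
    simp only [star_trivial] at this
    linarith
  have hp0 : p 0 = 0 := by
    have h1 : μ * (d₁₁ * (p 0 * p 0)) = 0 := by
      rw [hu0] at key; simpa using key
    have h2 : p 0 * p 0 = 0 := by
      rcases mul_eq_zero.mp h1 with h | h
      · exact absurd h hμ.ne'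
      · rcases mul_eq_zero.mp h with h | h
        · exact absurd h hd.ne'
        · exact h
    exact mul_self_eq_zero.mp h2
  have hBp : Bᵀ *ᵥ p = 0 := by
    rw [hu0] at h1
    have : (-Bᵀ) *ᵥ p = 0 := by simpa using h1
    simpa [Matrix.neg_mulVec, neg_eq_zero] using this
  have hpz : p = 0 := hker p hBp hp0
  rw [hvelim, hu0, hpz]
  funext i; cases i <;> rfl
end

section
/- Let n and N be positive integers, let A be a symmetric positive definite real n×n matrix, let M be a symmetric positive definite real N×N matrix, let B be a real N×n matrix, let D be a symmetric positive semidefinite real N×N matrix, and let μ > 0, c ≥ 0, d ≥ 0 be real numbers. Assume D ⪯ c·M and Bᵀ M⁻¹ B ⪯ d·A. Then the matrix S = μD + B A⁻¹ Bᵀ satisfies μD ⪯ S ⪯ (μc + d)·M. -/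
open Matrix

lemma psd_smul_aux {N : ℕ} {X : Matrix (Fin N) (Fin N) ℝ} (hX : X.PosSemidef)
    {r : ℝ} (hr : 0 ≤ r) : (r • X).PosSemidef := by
  refine ⟨?_, fun x => ?_⟩
  · show (r • X)ᴴ = r • X
    rw [conjTranspose_smul, hX.1.eq, star_trivial]
  · exact (hX.smul hr).2 x

lemma pd_smul_aux {n : ℕ} {X : Matrix (Fin n) (Fin n) ℝ} (hX : X.PosDef)
    {r : ℝ} (hr : 0 < r) : (r • X).PosDef := by
  refine ⟨?_, fun x hx => ?_⟩
  · show (r • X)ᴴ = r • X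
    rw [conjTranspose_smul, hX.1.eq, star_trivial]
  · exact (hX.smul hr).2 hx

/-- With `A` (n×n) and `M` (N×N) symmetric positive definite, `D` symmetric
positive semidefinite, `μ > 0`, `c ≥ 0`, `d ≥ 0`, and assuming `D ⪯ c·M` and
`Bᵀ M⁻¹ B ⪯ d·A`, the matrix `S = μD + B A⁻¹ Bᵀ` satisfies `μD ⪯ S ⪯ (μc + d)·M`,
where `X ⪯ Y` means `Y − X` is positive semidefinite. -/
theorem schur_complement_bounds {n N : ℕ} [NeZero n] [NeZero N]
    (A : Matrix (Fin n) (Fin n) ℝ) (hA : A.PosDef)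
    (M : Matrix (Fin N) (Fin N) ℝ) (hM : M.PosDef)
    (B : Matrix (Fin N) (Fin n) ℝ)
    (D : Matrix (Fin N) (Fin N) ℝ) (hD : D.PosSemidef)
    (μ c d : ℝ) (hμ : 0 < μ) (hc : 0 ≤ c) (hd : 0 ≤ d)
    (hDM : (c • M - D).PosSemidef)
    (hBA : (d • A - Bᵀ * M⁻¹ * B).PosSemidef)
    (S : Matrix (Fin N) (Fin N) ℝ) (hS : S = μ • D + B * A⁻¹ * Bᵀ) :
    (S - μ • D).PosSemidef ∧ ((μ * c + d) • M - S).PosSemidef := by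
  have hT : Bᴴ = Bᵀ := conjTranspose_eq_transpose_of_trivial B
  have hBABt : (B * A⁻¹ * Bᵀ).PosSemidef := by
    have := hA.inv.posSemidef.mul_mul_conjTranspose_same B
    rwa [hT] at this
  constructor
  · rw [hS]; simpa using hBABt
  · -- key: d • M - B * A⁻¹ * Bᵀ is PSD
    have key : (d • M - B * A⁻¹ * Bᵀ).PosSemidef := by
      rcases eq_or_lt_of_le hd with hd0 | hd0
      · -- d = 0 forces B = 0
        have hB0 : B = 0 := by
          have hMi := hM.inv
          ext i j
          by_contra h
          -- consider x = e_j, then B *ᵥ e_j ≠ 0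
          have hx : B *ᵥ (Pi.single j 1) ≠ 0 := by
            intro h0
            have := congrFun h0 i
            simp [mulVec_single] at this
            exact h this
          have hpos := hMi.dotProduct_mulVec_pos hx
          have hneg := hBA.dotProduct_mulVec_nonneg (Pi.single j 1)
          rw [← hd0] at hneg
          simp only [zero_smul, zero_sub, neg_mulVec, dotProduct_neg] at hneg
          have : 0 ≤ -(Pi.single j 1 ⬝ᵥ (Bᵀ * M⁻¹ * B) *ᵥ Pi.single j 1) := by
            simpa using hneg
          have heq : (Pi.single j 1 : Fin n → ℝ) ⬝ᵥ (Bᵀ * M⁻¹ * B) *ᵥ Pi.single j 1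
              = star (B *ᵥ Pi.single j 1) ⬝ᵥ M⁻¹ *ᵥ (B *ᵥ Pi.single j 1) := by
            rw [← mulVec_mulVec, ← mulVec_mulVec, dotProduct_mulVec (Pi.single j 1) Bᵀ,
              ← transpose_transpose B, vecMul_transpose, transpose_transpose]
            simp [dotProduct_mulVec, star]
            rfl
          rw [heq] at this
          have : star (B *ᵥ Pi.single j 1) ⬝ᵥ M⁻¹ *ᵥ (B *ᵥ Pi.single j 1) ≤ 0 :=
            by linarith [this]
          exact absurd hpos (not_lt.2 (by simpa using this))
        rw [hB0]
        simpa using psd_smul_aux hM.posSemidef hd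
      · -- d > 0: use Schur complement duality
        have hdA : (d • A).PosDef := pd_smul_aux hA hd0
        have hInv : Invertible (d • A) := hdA.isUnit.invertible
        have hMInv : Invertible M := hM.isUnit.invertible
        have h1 : (fromBlocks M B Bᴴ (d • A)).PosSemidef := by
          rw [PosDef.fromBlocks₁₁ B (d • A) hM, hT]
          exact hBA
        have h2 := (PosDef.fromBlocks₂₂ M B hdA).mp h1
        rw [hT] at h2
        have hinv : (d • A)⁻¹ = d⁻¹ • A⁻¹ := by
          apply Matrix.inv_eq_right_inv
          rw [Matrix.smul_mul, Matrix.mul_smul, smul_smul, mul_inv_cancel₀ (ne_of_gt hd0),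
            one_smul, Matrix.mul_nonsing_inv _ (isUnit_iff_isUnit_det A |>.mp hA.isUnit)]
        rw [hinv] at h2
        have h3 := psd_smul_aux h2 hd
        have heq : d • (M - B * d⁻¹ • A⁻¹ * Bᵀ) = d • M - B * A⁻¹ * Bᵀ := by
          rw [Matrix.mul_smul, Matrix.smul_mul, smul_sub, smul_smul,
            mul_inv_cancel₀ (ne_of_gt hd0), one_smul]
        rwa [heq] at h3
    have expand : (μ * c + d) • M - S
        = μ • (c • M - D) + (d • M - B * A⁻¹ * Bᵀ) := by
      rw [hS]
      rw [smul_sub, smul_smul]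
      module
    rw [expand]
    exact (psd_smul_aux hDM hμ.le).add key
end

section
/- Let n and N be positive integers and let R be a real N×n matrix. Consider the symmetric (n+N)×(n+N) block matrix K = [[Iₙ, −Rᵀ],[−R, 0]]. Then every eigenvalue λ of K satisfies: λ(λ−1) is an eigenvalue of R Rᵀ or λ(λ−1) is an eigenvalue of Rᵀ R. -/
/-!
If `(u, v)` is an eigenvector of `K` for `λ`, the two block rows read `Rᵀ v = (1 - λ) u` and
`R u = -λ v`. Substituting one into the other gives `Rᵀ R u = λ(λ-1) u` and `R Rᵀ v = λ(λ-1) v`,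
and at least one of `u`, `v` is nonzero.
-/

open Matrix

section SaddleMatrix

variable {m n α : Type*} [Fintype m] [Fintype n] [DecidableEq n] [CommRing α]

def saddleMatrix (R : Matrix m n α) : Matrix (n ⊕ m) (n ⊕ m) α :=
  fromBlocks 1 (-Rᵀ) (-R) 0

theorem saddleMatrix_mulVec_elim_eq_smul_iff {R : Matrix m n α} {lam : α} {u : n → α}
    {v : m → α} :
    saddleMatrix R *ᵥ Sum.elim u v = lam • Sum.elim u v ↔
      Rᵀ *ᵥ v = (1 - lam) • u ∧ R *ᵥ u = -lam • v := by
  rw [saddleMatrix, fromBlocks_mulVec, Sum.elim_comp_inl, Sum.elim_comp_inr,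
    show lam • Sum.elim u v = Sum.elim (lam • u) (lam • v) from Sum.comp_elim _ u v,
    Sum.elim_eq_iff]
  simp only [one_mulVec, neg_mulVec, zero_mulVec, add_zero]
  refine and_congr ⟨fun h ↦ ?_, fun h ↦ ?_⟩ ⟨fun h ↦ ?_, fun h ↦ ?_⟩
  · rw [sub_smul, one_smul, ← h]; abel
  · rw [h, sub_smul, one_smul]; abel
  · rw [neg_smul, ← h, neg_neg]
  · rw [h, neg_smul, neg_neg]

variable {R : Matrix m n α} {lam : α} {u : n → α} {v : m → α}

theorem transpose_mul_self_mulVec_of_saddleMatrix_mulVec_eq_smul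
    (h : saddleMatrix R *ᵥ Sum.elim u v = lam • Sum.elim u v) :
    (Rᵀ * R) *ᵥ u = (lam * (lam - 1)) • u := by
  obtain ⟨hRt, hR⟩ := saddleMatrix_mulVec_elim_eq_smul_iff.mp h
  rw [← mulVec_mulVec, hR, mulVec_smul, hRt, smul_smul]
  congr 1; ring

theorem mul_transpose_self_mulVec_of_saddleMatrix_mulVec_eq_smul
    (h : saddleMatrix R *ᵥ Sum.elim u v = lam • Sum.elim u v) :
    (R * Rᵀ) *ᵥ v = (lam * (lam - 1)) • v := by
  obtain ⟨hRt, hR⟩ := saddleMatrix_mulVec_elim_eq_smul_iff.mp h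
  rw [← mulVec_mulVec, hRt, mulVec_smul, hR, smul_smul]
  congr 1; ring

end SaddleMatrix

theorem block_eigenvalue_reduction_general {n N : ℕ}
    (R : Matrix (Fin N) (Fin n) ℝ)
    (K : Matrix (Fin n ⊕ Fin N) (Fin n ⊕ Fin N) ℝ)
    (hK : K = Matrix.fromBlocks 1 (-Rᵀ) (-R) 0)
    (lam : ℝ) (x : (Fin n ⊕ Fin N) → ℝ) (hx : x ≠ 0) (hEig : K *ᵥ x = lam • x) :
    (∃ y : Fin N → ℝ, y ≠ 0 ∧ (R * Rᵀ) *ᵥ y = (lam * (lam - 1)) • y) ∨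
    (∃ z : Fin n → ℝ, z ≠ 0 ∧ (Rᵀ * R) *ᵥ z = (lam * (lam - 1)) • z) := by
  rw [← Sum.elim_comp_inl_inr x] at hx hEig
  replace hEig : saddleMatrix R *ᵥ _ = _ := hK ▸ hEig
  by_cases hu : x ∘ Sum.inl = 0
  · refine .inl ⟨x ∘ Sum.inr, fun hv ↦ hx ?_,
      mul_transpose_self_mulVec_of_saddleMatrix_mulVec_eq_smul hEig⟩
    rw [hu, hv, Sum.elim_zero_zero]
  · exact .inr ⟨x ∘ Sum.inl, hu, transpose_mul_self_mulVec_of_saddleMatrix_mulVec_eq_smul hEig⟩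

/-- Every eigenvalue `λ` of the symmetric block matrix
`K = [[Iₙ, −Rᵀ],[−R, 0]]` satisfies: `λ(λ−1)` is an eigenvalue of `R Rᵀ` or of `Rᵀ R`. -/
theorem block_eigenvalue_reduction {n N : ℕ} [NeZero n] [NeZero N]
    (R : Matrix (Fin N) (Fin n) ℝ)
    (K : Matrix (Fin n ⊕ Fin N) (Fin n ⊕ Fin N) ℝ)
    (hK : K = Matrix.fromBlocks 1 (-Rᵀ) (-R) 0)
    (lam : ℝ) (x : (Fin n ⊕ Fin N) → ℝ) (hx : x ≠ 0) (hEig : K *ᵥ x = lam • x) :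
    (∃ y : Fin N → ℝ, y ≠ 0 ∧ (R * Rᵀ) *ᵥ y = (lam * (lam - 1)) • y) ∨
    (∃ z : Fin n → ℝ, z ≠ 0 ∧ (Rᵀ * R) *ᵥ z = (lam * (lam - 1)) • z) :=
  block_eigenvalue_reduction_general R K hK lam x hx hEig
end

section
/- Let n and N be positive integers, let R be a real N×n matrix, and let γ > 0 be an eigenvalue of R Rᵀ. Then both numbers λ₊ = (1 + √(1+4γ))/2 and λ₋ = (1 − √(1+4γ))/2 are eigenvalues of the symmetric (n+N)×(n+N) block matrix K = [[Iₙ, −Rᵀ],[−R, 0]]. -/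
/-!
If `R Rᵀ p = γ p` and `λ² = λ + γ`, then `(Rᵀ p, (1 - λ) p)` is an eigenvector of
`[[I, -Rᵀ], [-R, 0]]` for `λ`: the first block row reads `Rᵀ p - (1 - λ) Rᵀ p = λ Rᵀ p`, the second
`-R Rᵀ p = -γ p = λ (1 - λ) p`. It is nonzero because `γ ≠ 0` forces `λ ≠ 1`.
-/

open Matrix

section SaddlePoint

variable {m o α : Type*} [Fintype m] [Fintype o] [DecidableEq m]

theorem fromBlocks_one_neg_transpose_neg_zero_mulVec [CommRing α] (R : Matrix o m α)
    (p : o → α) {γ l : α} (hp : (R * Rᵀ) *ᵥ p = γ • p) (hl : l ^ 2 = l + γ) :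
    fromBlocks 1 (-Rᵀ) (-R) 0 *ᵥ Sum.elim (Rᵀ *ᵥ p) ((1 - l) • p) =
      l • Sum.elim (Rᵀ *ᵥ p) ((1 - l) • p) := by
  rw [fromBlocks_mulVec, Sum.elim_comp_inl, Sum.elim_comp_inr, zero_mulVec, add_zero,
    one_mulVec, neg_mulVec, neg_mulVec, mulVec_mulVec, hp, mulVec_smul]
  ext (i | i)
  · simp only [Sum.elim_inl, Pi.add_apply, Pi.neg_apply, Pi.smul_apply, smul_eq_mul]
    ring
  · simp only [Sum.elim_inr, Pi.neg_apply, Pi.smul_apply, smul_eq_mul]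
    linear_combination p i * hl

theorem exists_fromBlocks_one_neg_transpose_neg_zero_eigenvector [Field α]
    (R : Matrix o m α) {p : o → α} {γ l : α} (hp₀ : p ≠ 0) (hp : (R * Rᵀ) *ᵥ p = γ • p)
    (hγ : γ ≠ 0) (hl : l ^ 2 = l + γ) :
    ∃ x : m ⊕ o → α, x ≠ 0 ∧ fromBlocks 1 (-Rᵀ) (-R) 0 *ᵥ x = l • x := by
  have hl₁ : 1 - l ≠ 0 := by
    intro h
    obtain rfl : l = 1 := by linear_combination -h
    exact hγ (by linear_combination -hl)
  refine ⟨_, fun h ↦ ?_, fromBlocks_one_neg_transpose_neg_zero_mulVec R p hp hl⟩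
  exact smul_ne_zero hl₁ hp₀ (by simpa using congrArg (· ∘ Sum.inr) h)

end SaddlePoint

theorem block_eigenvalue_pair_general {n N : ℕ}
    (R : Matrix (Fin N) (Fin n) ℝ)
    (K : Matrix (Fin n ⊕ Fin N) (Fin n ⊕ Fin N) ℝ)
    (hK : K = Matrix.fromBlocks 1 (-Rᵀ) (-R) 0)
    (γ : ℝ) (hγ : 0 < γ)
    (hEig : ∃ p : Fin N → ℝ, p ≠ 0 ∧ (R * Rᵀ) *ᵥ p = γ • p) :
    (∃ x : (Fin n ⊕ Fin N) → ℝ, x ≠ 0 ∧ K *ᵥ x = ((1 + Real.sqrt (1 + 4 * γ)) / 2) • x) ∧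
    (∃ x : (Fin n ⊕ Fin N) → ℝ, x ≠ 0 ∧ K *ᵥ x = ((1 - Real.sqrt (1 + 4 * γ)) / 2) • x) := by
  obtain ⟨p, hp₀, hp⟩ := hEig
  subst hK
  have hs : Real.sqrt (1 + 4 * γ) ^ 2 = 1 + 4 * γ := Real.sq_sqrt (by linarith)
  exact ⟨exists_fromBlocks_one_neg_transpose_neg_zero_eigenvector R hp₀ hp hγ.ne'
      (by linear_combination hs / 4),
    exists_fromBlocks_one_neg_transpose_neg_zero_eigenvector R hp₀ hp hγ.ne'
      (by linear_combination hs / 4)⟩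

/-- If `γ > 0` is an eigenvalue of `R Rᵀ`, then both
`λ₊ = (1 + √(1+4γ))/2` and `λ₋ = (1 − √(1+4γ))/2` are eigenvalues of the symmetric block
matrix `K = [[Iₙ, −Rᵀ],[−R, 0]]`. -/
theorem block_eigenvalue_pair {n N : ℕ} [NeZero n] [NeZero N]
    (R : Matrix (Fin N) (Fin n) ℝ)
    (K : Matrix (Fin n ⊕ Fin N) (Fin n ⊕ Fin N) ℝ)
    (hK : K = Matrix.fromBlocks 1 (-Rᵀ) (-R) 0)
    (γ : ℝ) (hγ : 0 < γ)
    (hEig : ∃ p : Fin N → ℝ, p ≠ 0 ∧ (R * Rᵀ) *ᵥ p = γ • p) :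
    (∃ x : (Fin n ⊕ Fin N) → ℝ, x ≠ 0 ∧ K *ᵥ x = ((1 + Real.sqrt (1 + 4 * γ)) / 2) • x) ∧
    (∃ x : (Fin n ⊕ Fin N) → ℝ, x ≠ 0 ∧ K *ᵥ x = ((1 - Real.sqrt (1 + 4 * γ)) / 2) • x) :=
  block_eigenvalue_pair_general R K hK γ hγ hEig
end

section
/- Let n and N be positive integers, let R be a real N×n matrix, and let 0 < β² ≤ δ be real numbers such that every nonzero eigenvalue γ of R Rᵀ satisfies β² ≤ γ ≤ δ. Then every eigenvalue λ of the symmetric (n+N)×(n+N) block matrix K = [[Iₙ, −Rᵀ],[−R, 0]] lies in the set [(1−√(1+4δ))/2, (1−√(1+4β²))/2] ∪ {0, 1} ∪ [(1+√(1+4β²))/2, (1+√(1+4δ))/2]. -/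
/-!
If `K (u, p) = λ (u, p)` then `Rᵀ p = (1 - λ) u` and `R u = -λ p`, so for `λ ∉ {0, 1}` the
block `p` is an eigenvector of `R Rᵀ` with the nonzero eigenvalue `λ² - λ`. Hence
`β² ≤ λ² - λ ≤ δ`, and since `(2λ - 1)² = 1 + 4 (λ² - λ)`, the distance `|2λ - 1|` lies between
`√(1 + 4β²)` and `√(1 + 4δ)`.
-/

open Matrix

section SaddlePoint

variable {m n 𝕜 : Type*} [Fintype m]

theorem fromBlocks_one_neg_transpose_mulVec_eq_smul_iff [Fintype n] [DecidableEq n]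
    [CommRing 𝕜] (R : Matrix m n 𝕜) (lam : 𝕜) (x : n ⊕ m → 𝕜) :
    fromBlocks 1 (-Rᵀ) (-R) 0 *ᵥ x = lam • x ↔
      Rᵀ *ᵥ (x ∘ Sum.inr) = (1 - lam) • (x ∘ Sum.inl) ∧
        R *ᵥ (x ∘ Sum.inl) = (-lam) • (x ∘ Sum.inr) := by
  rw [fromBlocks_mulVec, funext_iff, Sum.forall, funext_iff, funext_iff]
  simp only [Sum.elim_inl, Sum.elim_inr, Pi.add_apply, Pi.smul_apply, Function.comp_apply,
    one_mulVec, neg_mulVec, zero_mulVec, Pi.neg_apply, Pi.zero_apply, smul_eq_mul]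
  refine and_congr (forall_congr' fun i => ?_) (forall_congr' fun j => ?_) <;>
    constructor <;> intro h <;> linear_combination -h

theorem mul_transpose_mulVec_eq_smul_of_mulVec_eq_smul [Fintype n] [CommRing 𝕜]
    {R : Matrix m n 𝕜} {lam : 𝕜} {u : n → 𝕜} {p : m → 𝕜}
    (hRt : Rᵀ *ᵥ p = (1 - lam) • u) (hR : R *ᵥ u = (-lam) • p) :
    (R * Rᵀ) *ᵥ p = (lam ^ 2 - lam) • p := by
  rw [← mulVec_mulVec, hRt, mulVec_smul, hR, smul_smul]
  ring_nf

theorem ne_zero_of_transpose_mulVec_eq_smul [Field 𝕜] {R : Matrix m n 𝕜} {lam : 𝕜}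
    {x : n ⊕ m → 𝕜} (hx : x ≠ 0) (hlam : lam ≠ 1)
    (hRt : Rᵀ *ᵥ (x ∘ Sum.inr) = (1 - lam) • (x ∘ Sum.inl)) : x ∘ Sum.inr ≠ 0 := by
  intro hp
  rw [hp, mulVec_zero, eq_comm, smul_eq_zero, sub_eq_zero] at hRt
  refine hx (funext (Sum.rec (fun i => ?_) (fun j => congrFun hp j)))
  exact congrFun (hRt.resolve_left (Ne.symm hlam)) i

end SaddlePoint

theorem mem_Icc_union_Icc_of_sq_sub_self_mem_Icc {a b lam : ℝ} (ha : a ≤ lam ^ 2 - lam)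
    (hb : lam ^ 2 - lam ≤ b) :
    lam ∈ Set.Icc ((1 - √(1 + 4 * b)) / 2) ((1 - √(1 + 4 * a)) / 2) ∪
      Set.Icc ((1 + √(1 + 4 * a)) / 2) ((1 + √(1 + 4 * b)) / 2) := by
  have hsq : (2 * lam - 1) ^ 2 = 1 + 4 * (lam ^ 2 - lam) := by ring
  have hlo : √(1 + 4 * a) ≤ |2 * lam - 1| := by
    rw [← Real.sqrt_sq_eq_abs, hsq]; exact Real.sqrt_le_sqrt (by linarith)
  have hhi : |2 * lam - 1| ≤ √(1 + 4 * b) := by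
    rw [← Real.sqrt_sq_eq_abs, hsq]; exact Real.sqrt_le_sqrt (by linarith)
  rcases abs_cases (2 * lam - 1) with ⟨habs, -⟩ | ⟨habs, -⟩ <;> rw [habs] at hlo hhi
  · exact Or.inr ⟨by linarith, by linarith⟩
  · exact Or.inl ⟨by linarith, by linarith⟩

theorem block_eigenvalue_localization_general {n N : ℕ}
    (R : Matrix (Fin N) (Fin n) ℝ)
    (β δ : ℝ)
    (hspec : ∀ γ : ℝ, γ ≠ 0 →
      (∃ p : Fin N → ℝ, p ≠ 0 ∧ (R * Rᵀ) *ᵥ p = γ • p) → β ^ 2 ≤ γ ∧ γ ≤ δ)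
    (K : Matrix (Fin n ⊕ Fin N) (Fin n ⊕ Fin N) ℝ)
    (hK : K = Matrix.fromBlocks 1 (-Rᵀ) (-R) 0)
    (lam : ℝ) (x : (Fin n ⊕ Fin N) → ℝ) (hx : x ≠ 0) (hEig : K *ᵥ x = lam • x) :
    lam ∈ Set.Icc ((1 - Real.sqrt (1 + 4 * δ)) / 2) ((1 - Real.sqrt (1 + 4 * β ^ 2)) / 2)
      ∪ ({0, 1} : Set ℝ)
      ∪ Set.Icc ((1 + Real.sqrt (1 + 4 * β ^ 2)) / 2) ((1 + Real.sqrt (1 + 4 * δ)) / 2) := by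
  by_cases hlam : lam = 0 ∨ lam = 1
  · exact Or.inl (Or.inr hlam)
  obtain ⟨hlam0, hlam1⟩ := not_or.mp hlam
  obtain ⟨hRt, hR⟩ := (fromBlocks_one_neg_transpose_mulVec_eq_smul_iff R lam x).mp (hK ▸ hEig)
  have hγ : lam ^ 2 - lam ≠ 0 := by
    rw [sq, ← mul_sub_one]
    exact mul_ne_zero hlam0 (sub_ne_zero.mpr hlam1)
  obtain ⟨hlo, hhi⟩ := hspec _ hγ ⟨x ∘ Sum.inr, ne_zero_of_transpose_mulVec_eq_smul hx hlam1 hRt,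
    mul_transpose_mulVec_eq_smul_of_mulVec_eq_smul hRt hR⟩
  rcases mem_Icc_union_Icc_of_sq_sub_self_mem_Icc hlo hhi with h | h
  · exact Or.inl (Or.inl h)
  · exact Or.inr h

/-- If every nonzero eigenvalue `γ` of `R Rᵀ` satisfies `β² ≤ γ ≤ δ`
(with `0 < β² ≤ δ`), then every eigenvalue `λ` of `K = [[Iₙ, −Rᵀ],[−R, 0]]` lies in
`[(1−√(1+4δ))/2, (1−√(1+4β²))/2] ∪ {0, 1} ∪ [(1+√(1+4β²))/2, (1+√(1+4δ))/2]`. -/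
theorem block_eigenvalue_localization {n N : ℕ} [NeZero n] [NeZero N]
    (R : Matrix (Fin N) (Fin n) ℝ)
    (β δ : ℝ) (hβ : 0 < β ^ 2) (hβδ : β ^ 2 ≤ δ)
    (hspec : ∀ γ : ℝ, γ ≠ 0 →
      (∃ p : Fin N → ℝ, p ≠ 0 ∧ (R * Rᵀ) *ᵥ p = γ • p) → β ^ 2 ≤ γ ∧ γ ≤ δ)
    (K : Matrix (Fin n ⊕ Fin N) (Fin n ⊕ Fin N) ℝ)
    (hK : K = Matrix.fromBlocks 1 (-Rᵀ) (-R) 0)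
    (lam : ℝ) (x : (Fin n ⊕ Fin N) → ℝ) (hx : x ≠ 0) (hEig : K *ᵥ x = lam • x) :
    lam ∈ Set.Icc ((1 - Real.sqrt (1 + 4 * δ)) / 2) ((1 - Real.sqrt (1 + 4 * β ^ 2)) / 2)
      ∪ ({0, 1} : Set ℝ)
      ∪ Set.Icc ((1 + Real.sqrt (1 + 4 * β ^ 2)) / 2) ((1 + Real.sqrt (1 + 4 * δ)) / 2) :=
  block_eigenvalue_localization_general R β δ hspec K hK lam x hx hEig
end

section
/- Let N be a positive integer, let M be a symmetric positive semidefinite real N×N matrix such that 0 is an eigenvalue of M and every nonzero eigenvalue of M lies in the interval [β², δ], where 0 < β² ≤ δ. Let ε > 0 and let E = ε·e₁e₁ᵀ be the N×N matrix whose only nonzero entry is ε in position (1,1). Then every eigenvalue of M + E lies in [0, ε] ∪ [β², δ + ε]. -/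
open Matrix

section aux

variable {N : ℕ}

/-- Quadratic form bounds from the spectrum: if every eigenvalue of a symmetric real matrix
`M` is `0` or in `[b, d]` (with `0 ≤ b`, `0 ≤ d`), then `x⬝Mx ≤ d‖x‖²` and
`b·(x⬝Mx) ≤ ‖Mx‖²`. -/
lemma quad_bounds (M : Matrix (Fin N) (Fin N) ℝ) (hH : M.IsHermitian)
    (b d : ℝ) (hb : 0 ≤ b)
    (hμ : ∀ i, hH.eigenvalues i = 0 ∨ (b ≤ hH.eigenvalues i ∧ hH.eigenvalues i ≤ d))
    (hd : 0 ≤ d) (x : Fin N → ℝ) :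
    x ⬝ᵥ (M *ᵥ x) ≤ d * (x ⬝ᵥ x) ∧ b * (x ⬝ᵥ (M *ᵥ x)) ≤ (M *ᵥ x) ⬝ᵥ (M *ᵥ x) := by
  classical
  set U : Matrix (Fin N) (Fin N) ℝ := (hH.eigenvectorUnitary : Matrix (Fin N) (Fin N) ℝ)
  set μ : Fin N → ℝ := hH.eigenvalues
  have hU1 : star U * U = 1 := Unitary.coe_star_mul_self hH.eigenvectorUnitary
  have hU2 : U * star U = 1 := Unitary.coe_mul_star_self hH.eigenvectorUnitary
  have hspec : M = U * diagonal μ * star U := by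
    have := hH.spectral_theorem
    simpa [U, μ] using this
  set y : Fin N → ℝ := star U *ᵥ x with hy
  have hxy : x = U *ᵥ y := by
    rw [hy, mulVec_mulVec, hU2, one_mulVec]
  have hpres : ∀ a b : Fin N → ℝ, (U *ᵥ a) ⬝ᵥ (U *ᵥ b) = a ⬝ᵥ b := by
    intro a c
    rw [dotProduct_mulVec, ← mulVec_transpose]
    have : Uᵀ = star U := by
      simp [star, conjTranspose]
    rw [this, mulVec_mulVec, hU1, one_mulVec]
  have hMx : M *ᵥ x = U *ᵥ (diagonal μ *ᵥ y) := by
    rw [hspec, hy]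
    simp [mulVec_mulVec, Matrix.mul_assoc]
  have h1 : x ⬝ᵥ (M *ᵥ x) = y ⬝ᵥ (diagonal μ *ᵥ y) := by
    rw [hMx]
    conv_lhs => rw [hxy]
    exact hpres _ _
  have h2 : (M *ᵥ x) ⬝ᵥ (M *ᵥ x) = (diagonal μ *ᵥ y) ⬝ᵥ (diagonal μ *ᵥ y) := by
    rw [hMx, hpres]
  have h3 : x ⬝ᵥ x = y ⬝ᵥ y := by
    conv_lhs => rw [hxy]
    exact hpres _ _
  have hdiag : ∀ i, (diagonal μ *ᵥ y) i = μ i * y i := by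
    intro i; simp [mulVec_diagonal]
  constructor
  · rw [h1, h3, dotProduct, dotProduct, Finset.mul_sum]
    apply Finset.sum_le_sum
    intro i _
    rw [hdiag]
    rcases hμ i with h | ⟨h', h''⟩
    · rw [h]; nlinarith [sq_nonneg (y i)]
    · nlinarith [sq_nonneg (y i)]
  · rw [h1, h2, dotProduct, dotProduct, Finset.mul_sum]
    apply Finset.sum_le_sum
    intro i _
    rw [hdiag]
    rcases hμ i with h | ⟨h', h''⟩
    · rw [h]; nlinarith [sq_nonneg (y i)]
    · nlinarith [mul_nonneg (mul_nonneg (sub_nonneg.mpr h') (hb.trans h')) (sq_nonneg (y i)),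
        sq_nonneg (y i)]

end aux

/-- Let `M` be symmetric positive semidefinite with `0` an eigenvalue and all
nonzero eigenvalues in `[β², δ]` (with `0 < β² ≤ δ`). Let `E = ε·e₁e₁ᵀ` with `ε > 0`.
Then every eigenvalue of `M + E` lies in `[0, ε] ∪ [β², δ + ε]`. -/
theorem perturbed_eigenvalue_localization {N : ℕ} [NeZero N]
    (M : Matrix (Fin N) (Fin N) ℝ) (hM : M.PosSemidef)
    (β δ : ℝ) (hβ : 0 < β ^ 2) (hβδ : β ^ 2 ≤ δ)
    (h0 : ∃ x : Fin N → ℝ, x ≠ 0 ∧ M *ᵥ x = (0 : ℝ) • x)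
    (hspec : ∀ γ : ℝ, γ ≠ 0 →
      (∃ x : Fin N → ℝ, x ≠ 0 ∧ M *ᵥ x = γ • x) → γ ∈ Set.Icc (β ^ 2) δ)
    (ε : ℝ) (hε : 0 < ε)
    (E : Matrix (Fin N) (Fin N) ℝ) (hE : E = Matrix.single 0 0 ε)
    (lam : ℝ) (x : Fin N → ℝ) (hx : x ≠ 0) (hEig : (M + E) *ᵥ x = lam • x) :
    lam ∈ Set.Icc 0 ε ∪ Set.Icc (β ^ 2) (δ + ε) := by
  classical
  have hH : M.IsHermitian := hM.1
  have hδ0 : 0 ≤ δ := le_trans hβ.le hβδ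
  -- eigenvalues of M are 0 or in [β², δ]
  have hμ : ∀ i, hH.eigenvalues i = 0 ∨ (β ^ 2 ≤ hH.eigenvalues i ∧ hH.eigenvalues i ≤ δ) := by
    intro i
    by_cases h : hH.eigenvalues i = 0
    · exact Or.inl h
    · right
      have hv : M *ᵥ ⇑(hH.eigenvectorBasis i) = hH.eigenvalues i • ⇑(hH.eigenvectorBasis i) :=
        hH.mulVec_eigenvectorBasis i
      have hvne : ⇑(hH.eigenvectorBasis i) ≠ 0 := by
        intro hcon
        have := hH.eigenvectorBasis.orthonormal.ne_zero i
        apply this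
        ext j
        exact congrFun hcon j
      exact hspec _ h ⟨_, hvne, hv⟩
  obtain ⟨hQ1, hQ2⟩ := quad_bounds M hH (β ^ 2) δ hβ.le hμ hδ0 x
  -- basic quantities
  set s : ℝ := x ⬝ᵥ x with hs
  set t : ℝ := (x 0) ^ 2 with ht
  have hsnn : 0 ≤ s := by
    apply Finset.sum_nonneg
    intro i _
    exact mul_self_nonneg _
  have hspos : 0 < s := lt_of_le_of_ne hsnn (fun h => hx (dotProduct_self_eq_zero.mp h.symm))
  have htnn : 0 ≤ t := sq_nonneg _
  have hts : t ≤ s := by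
    have := Finset.single_le_sum (f := fun i => x i * x i)
      (fun i _ => mul_self_nonneg (x i)) (Finset.mem_univ (0 : Fin N))
    calc t = x 0 * x 0 := sq (x 0)
    _ ≤ s := this
  -- the perturbation vector
  set w : Fin N → ℝ := E *ᵥ x with hwdef
  have hw : ∀ i, w i = if i = 0 then ε * x 0 else 0 := by
    intro i
    simp [hwdef, hE, mulVec, dotProduct, single, ite_and, Finset.sum_ite_eq, eq_comm]
  have hxw : x ⬝ᵥ w = ε * t := by
    simp only [dotProduct]
    rw [Finset.sum_eq_single (0 : Fin N)]
    · rw [hw]; simp [ht]; ring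
    · intro i _ hi; rw [hw]; simp [hi]
    · intro h; exact absurd (Finset.mem_univ _) h
  have hww : w ⬝ᵥ w = ε ^ 2 * t := by
    simp only [dotProduct]
    rw [Finset.sum_eq_single (0 : Fin N)]
    · rw [hw]; simp [ht]; ring
    · intro i _ hi; rw [hw]; simp [hi]
    · intro h; exact absurd (Finset.mem_univ _) h
  -- eigen-equation rearranged
  have hMx : M *ᵥ x = lam • x - w := by
    rw [hwdef, eq_sub_iff_add_eq, ← add_mulVec, hEig]
  have ha : x ⬝ᵥ (M *ᵥ x) = lam * s - ε * t := by
    rw [hMx, dotProduct_sub, dotProduct_smul, hxw, smul_eq_mul, hs]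
  have hq : (M *ᵥ x) ⬝ᵥ (M *ᵥ x) = lam ^ 2 * s - 2 * lam * (ε * t) + ε ^ 2 * t := by
    rw [hMx, sub_dotProduct, dotProduct_sub, dotProduct_sub, smul_dotProduct,
      dotProduct_smul, smul_dotProduct, dotProduct_smul, hww]
    have hwx : w ⬝ᵥ x = ε * t := by rw [dotProduct_comm]; exact hxw
    rw [hwx, hxw, smul_eq_mul, smul_eq_mul, smul_eq_mul, hs]
    ring
  -- positive semidefiniteness
  have hpsd : 0 ≤ x ⬝ᵥ (M *ᵥ x) := by
    have := hM.dotProduct_mulVec_nonneg x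
    simpa using this
  rw [ha] at hpsd hQ1
  rw [ha, hq] at hQ2
  -- lam ≥ 0
  have hlam0 : 0 ≤ lam := by
    nlinarith
  -- lam ≤ δ + ε
  have hlamtop : lam ≤ δ + ε := by
    nlinarith
  by_cases hle : lam ≤ ε
  · exact Or.inl ⟨hlam0, hle⟩
  · right
    push_neg at hle
    refine ⟨?_, hlamtop⟩
    by_contra hcon
    push_neg at hcon
    -- lam ∈ (ε, β²) is impossible
    have hβε : (0:ℝ) < β ^ 2 + ε - lam := by nlinarith
    rcases eq_or_lt_of_le htnn with hteq | htpos
    · rw [← hteq] at hQ2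
      nlinarith [mul_pos hspos (mul_pos (hε.trans hle) (sub_pos.mpr hcon))]
    · nlinarith [mul_nonneg (sub_nonneg.mpr hts)
          (mul_pos hspos (mul_pos (hε.trans hle) (sub_pos.mpr hcon))).le,
        mul_pos (mul_pos htpos hspos) (mul_pos (sub_pos.mpr hle) hβε),
        mul_pos hspos hspos, mul_pos htpos hspos]
end

section
/- Let N be a positive integer, let M be a symmetric positive semidefinite real N×N matrix, let v ∈ ℝᴺ be a unit vector with Mv = 0, and let β > 0 be such that xᵀMx ≥ β²‖x‖² for every vector x orthogonal to v. Let ε > 0, let v₁ denote the first component of v, let E = ε·e₁e₁ᵀ, and set s = ε(1 + v₁²) − β². Then the smallest eigenvalue of M + E satisfies λ_min(M + E) ≥ β² + (s − √(s² + 4εβ²))/2. -/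
open Matrix

/-- Scalar arithmetic core: either the eigenvector is essentially supported away from
the perturbation (degenerate case), or the key quadratic inequality holds. -/
lemma key_arith_aux (β ε lam v0 a w0 : ℝ) (hβ : 0 < β) (hε : 0 < ε)
    (hcase : lam < β ^ 2)
    (eq2 : ε * (v0 * (a * v0 + w0)) = lam * a)
    (hC : ε * (w0 * (a * v0 + w0)) ≤ (lam - β ^ 2) * (w0 * w0)) :
    (a = 0 ∧ w0 = 0) ∨ (lam - β ^ 2) * (lam - ε * (1 + v0 ^ 2)) ≤ ε * β ^ 2 := by
  have e2a : ε * a ^ 2 * v0 ^ 2 + ε * (a * v0 * w0) = lam * a ^ 2 := by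
    linear_combination a * eq2
  have starP : a ^ 2 * (lam - ε * v0 ^ 2) + (ε + β ^ 2 - lam) * w0 ^ 2 ≤ 0 := by
    nlinarith [hC, e2a]
  have eqD : a * (lam - ε * v0 ^ 2) = ε * (v0 * w0) := by linear_combination (-1 : ℝ) * eq2
  rcases eq_or_ne a 0 with ha | ha
  · subst ha
    left
    refine ⟨rfl, ?_⟩
    by_contra h
    have h2 : 0 < w0 ^ 2 := by positivity
    nlinarith [starP, h2, hε, hcase]
  · right
    rcases eq_or_ne w0 0 with hw0 | hw0
    · have hlam : lam = ε * v0 ^ 2 := by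
        have h0 : a * (lam - ε * v0 ^ 2) = 0 := by rw [eqD, hw0]; ring
        rcases mul_eq_zero.mp h0 with h | h
        · exact absurd h ha
        · linarith
      rw [hlam]
      nlinarith [mul_nonneg (mul_nonneg hε.le hε.le) (sq_nonneg v0)]
    · have ha2 : 0 < a ^ 2 := by positivity
      have hw02 : 0 < w0 ^ 2 := by positivity
      have hlneg : lam - ε * v0 ^ 2 < 0 := by nlinarith [starP]
      have hm : a ^ 2 * (lam - ε * v0 ^ 2) ^ 2 +
          (ε + β ^ 2 - lam) * w0 ^ 2 * (lam - ε * v0 ^ 2) ≥ 0 := by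
        nlinarith [starP, hlneg]
      have hsq : a ^ 2 * (lam - ε * v0 ^ 2) ^ 2 = ε ^ 2 * v0 ^ 2 * w0 ^ 2 := by
        nlinarith [eqD, sq_nonneg (a * (lam - ε * v0 ^ 2) - ε * (v0 * w0))]
      have cond : ε ^ 2 * v0 ^ 2 + (ε + β ^ 2 - lam) * (lam - ε * v0 ^ 2) ≥ 0 := by
        rw [hsq] at hm
        nlinarith [hm, hw02]
      nlinarith [cond]

/-- Scalar arithmetic: from the key quadratic inequality to the eigenvalue bound. -/
lemma final_arith_aux (s β ε lam : ℝ) (hβ : 0 < β) (hε : 0 < ε)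
    (hcase : lam < β ^ 2)
    (KEY : (lam - β ^ 2) * (lam - β ^ 2 - s) ≤ ε * β ^ 2) :
    β ^ 2 + (s - Real.sqrt (s ^ 2 + 4 * ε * β ^ 2)) / 2 ≤ lam := by
  have hDnn : (0:ℝ) ≤ s ^ 2 + 4 * ε * β ^ 2 := by positivity
  have h1 : 0 ≤ Real.sqrt (s ^ 2 + 4 * ε * β ^ 2) := Real.sqrt_nonneg _
  have h2 : Real.sqrt (s ^ 2 + 4 * ε * β ^ 2) ^ 2 = s ^ 2 + 4 * ε * β ^ 2 :=
    Real.sq_sqrt hDnn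
  nlinarith [KEY, h1, h2, hcase]

/-- Scalar arithmetic: the easy case `lam ≥ β²`. -/
lemma easy_arith_aux (s β ε lam : ℝ) (hβ : 0 < β) (hε : 0 < ε)
    (hcase : β ^ 2 ≤ lam) :
    β ^ 2 + (s - Real.sqrt (s ^ 2 + 4 * ε * β ^ 2)) / 2 ≤ lam := by
  have hsle : s ≤ Real.sqrt (s ^ 2 + 4 * ε * β ^ 2) := by
    calc s ≤ |s| := le_abs_self s
    _ = Real.sqrt (s ^ 2) := (Real.sqrt_sq_eq_abs s).symm
    _ ≤ Real.sqrt (s ^ 2 + 4 * ε * β ^ 2) := Real.sqrt_le_sqrt (by nlinarith)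
  linarith

/-- Let `M` be symmetric positive semidefinite, `v` a unit vector with
`Mv = 0`, and `β > 0` with `xᵀMx ≥ β²‖x‖²` for all `x ⊥ v`. Let `ε > 0`, `E = ε·e₁e₁ᵀ`,
`v₁` the first component of `v`, and `s = ε(1 + v₁²) − β²`. Then the smallest eigenvalue of
`M + E` satisfies `λ_min(M + E) ≥ β² + (s − √(s² + 4εβ²))/2`, i.e. every eigenvalue of
`M + E` is at least this quantity. -/
theorem perturbed_smallest_eigenvalue_bound {N : ℕ} [NeZero N]
    (M : Matrix (Fin N) (Fin N) ℝ) (hM : M.PosSemidef)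
    (v : Fin N → ℝ) (hv : v ⬝ᵥ v = 1) (hMv : M *ᵥ v = 0)
    (β : ℝ) (hβ : 0 < β)
    (hcoer : ∀ x : Fin N → ℝ, v ⬝ᵥ x = 0 → β ^ 2 * (x ⬝ᵥ x) ≤ x ⬝ᵥ (M *ᵥ x))
    (ε : ℝ) (hε : 0 < ε)
    (E : Matrix (Fin N) (Fin N) ℝ) (hE : E = Matrix.single 0 0 ε)
    (s : ℝ) (hs : s = ε * (1 + (v 0) ^ 2) - β ^ 2)
    (lam : ℝ) (x : Fin N → ℝ) (hx : x ≠ 0) (hEig : (M + E) *ᵥ x = lam • x) :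
    β ^ 2 + (s - Real.sqrt (s ^ 2 + 4 * ε * β ^ 2)) / 2 ≤ lam := by
  rcases le_or_gt (β ^ 2) lam with hcase | hcase
  · exact easy_arith_aux s β ε lam hβ hε hcase
  · have hEdot : ∀ y z : Fin N → ℝ, y ⬝ᵥ (E *ᵥ z) = ε * (y 0 * z 0) := by
      intro y z
      subst hE
      simp [mulVec, dotProduct, single, ite_and, Finset.mul_sum]
      ring
    have hsym : ∀ y z : Fin N → ℝ, y ⬝ᵥ (M *ᵥ z) = (M *ᵥ y) ⬝ᵥ z := by
      intro y z
      have ht : Mᵀ = M := by simpa using hM.1.eq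
      rw [dotProduct_mulVec, ← mulVec_transpose, ht]
    set a : ℝ := v ⬝ᵥ x with ha_def
    set w : Fin N → ℝ := x - a • v with hw_def
    have hxw : x = w + a • v := by simp [hw_def]
    have hvw : v ⬝ᵥ w = 0 := by
      simp [hw_def, dotProduct_sub, dotProduct_smul, hv, smul_eq_mul, ← ha_def]
    have hwv : w ⬝ᵥ v = 0 := by rw [dotProduct_comm]; exact hvw
    have hx0 : x 0 = a * v 0 + w 0 := by
      have : w 0 = x 0 - a * v 0 := by simp [hw_def]
      linarith
    -- eigen equation dotted with v
    have eq2 : ε * (v 0 * x 0) = lam * a := by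
      have h := congrArg (fun y => v ⬝ᵥ y) hEig
      simp only [add_mulVec, dotProduct_add, dotProduct_smul, smul_eq_mul] at h
      rw [hEdot, hsym, hMv] at h
      simpa [← ha_def] using h
    -- eigen equation dotted with w
    have ineqA : β ^ 2 * (w ⬝ᵥ w) + ε * (w 0 * x 0) ≤ lam * (w ⬝ᵥ w) := by
      have h := congrArg (fun y => w ⬝ᵥ y) hEig
      simp only [add_mulVec, dotProduct_add, dotProduct_smul, smul_eq_mul] at h
      rw [hEdot] at h
      have hwx : w ⬝ᵥ x = w ⬝ᵥ w := by
        rw [hxw, dotProduct_add, dotProduct_smul, hwv]; simp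
      have hMx : w ⬝ᵥ (M *ᵥ x) = w ⬝ᵥ (M *ᵥ w) := by
        rw [hxw, mulVec_add, mulVec_smul, hMv, dotProduct_add]; simp
      rw [hMx, hwx] at h
      have hc := hcoer w hvw
      linarith
    have ineqB : w 0 * w 0 ≤ w ⬝ᵥ w := by
      have h0 : ∀ i ∈ Finset.univ, (0:ℝ) ≤ w i * w i := fun i _ => mul_self_nonneg _
      simpa [dotProduct] using Finset.single_le_sum h0 (Finset.mem_univ 0)
    have hC : ε * (w 0 * x 0) ≤ (lam - β ^ 2) * (w 0 * w 0) := by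
      have h3 : (lam - β ^ 2) * (w ⬝ᵥ w) ≤ (lam - β ^ 2) * (w 0 * w 0) :=
        mul_le_mul_of_nonpos_left ineqB (by linarith)
      nlinarith [ineqA]
    have eq2' : ε * (v 0 * (a * v 0 + w 0)) = lam * a := by rw [← hx0]; exact eq2
    have hC' : ε * (w 0 * (a * v 0 + w 0)) ≤ (lam - β ^ 2) * (w 0 * w 0) := by
      rw [← hx0]; exact hC
    rcases key_arith_aux β ε lam (v 0) a (w 0) hβ hε hcase eq2' hC' with ⟨ha, hw0⟩ | KEY
    · -- degenerate case: a = 0 and w 0 = 0, contradiction with lam < β²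
      exfalso
      have hxxnn : (0:ℝ) ≤ x ⬝ᵥ x :=
        Finset.sum_nonneg fun i _ => mul_self_nonneg _
      have hxx : (0:ℝ) < x ⬝ᵥ x := by
        rcases hxxnn.lt_or_eq with h | h
        · exact h
        · exact absurd (dotProduct_self_eq_zero.mp h.symm) hx
      have hwx : w = x := by simp [hw_def, ha]
      have hx00 : x 0 = 0 := by rw [hx0, ha, hw0]; ring
      have hA := ineqA
      rw [hwx, hx00] at hA
      nlinarith [hA, hxx]
    · have KEY' : (lam - β ^ 2) * (lam - β ^ 2 - s) ≤ ε * β ^ 2 := by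
        have h : lam - β ^ 2 - s = lam - ε * (1 + (v 0) ^ 2) := by rw [hs]; ring
        rw [h]; exact KEY
      exact final_arith_aux s β ε lam hβ hε hcase KEY'
end

section
/- Let H be a symmetric real m×m matrix, let a and b be real numbers with 1 < a ≤ b, let λ₁ be a nonzero real number, and assume every eigenvalue of H lies in the set {λ₁} ∪ [1−b, 1−a] ∪ [a, b]. Then for every natural number k there exists a real polynomial p with deg p ≤ 2k+1 and p(0) = 1 such that ‖p(H)‖ ≤ 2·((b + |λ₁|)/|λ₁|)·((√(b²−b) − √(a²−a))/(√(b²−b) + √(a²−a)))ᵏ, where ‖·‖ is the spectral norm and p(H) denotes the evaluation of p at the matrix H. -/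
open Matrix Polynomial

/-- The spectral norm (ℓ²-operator norm) of a real matrix. -/
noncomputable def spectralNorm' {m n : ℕ} (M : Matrix (Fin m) (Fin n) ℝ) : ℝ :=
  ‖LinearMap.toContinuousLinearMap (Matrix.toEuclideanLin (𝕜 := ℝ) M)‖

namespace MinresAux

open Polynomial.Chebyshev

lemma natDegree_T_le : ∀ n : ℕ, (T ℝ (n:ℤ)).natDegree ≤ n := by
  intro n
  induction n using Nat.twoStepInduction with
  | zero => simp [T_zero]
  | one => simp [T_one]
  | more n ih1 ih2 =>
    push_cast [T_add_two]
    push_cast at ih1 ih2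
    apply le_trans (natDegree_sub_le _ _)
    simp only [max_le_iff]
    constructor
    · apply le_trans (natDegree_mul_le)
      have h2 : (2 * X : ℝ[X]).natDegree ≤ 1 := by
        apply le_trans (natDegree_mul_le); simp
      omega
    · omega

lemma eval_T_half (z : ℝ) (hz : z ≠ 0) :
    ∀ n : ℕ, (T ℝ (n:ℤ)).eval ((z + z⁻¹)/2) = (z^n + z⁻¹^n)/2 := by
  intro n
  induction n using Nat.twoStepInduction with
  | zero => simp [T_zero]
  | one => simp [T_one]
  | more n ih1 ih2 =>
    push_cast [T_add_two]
    push_cast at ih1 ih2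
    simp only [eval_sub, eval_mul, eval_ofNat, eval_X, ih1, ih2]
    field_simp
    linear_combination (z * z⁻¹ ^ n - z⁻¹ * z⁻¹ ^ n) * mul_inv_cancel₀ hz

lemma abs_eval_T_le (n : ℕ) (x : ℝ) (hx : |x| ≤ 1) : |(T ℝ (n:ℤ)).eval x| ≤ 1 := by
  have h1 : -1 ≤ x := by linarith [abs_le.mp hx |>.1]
  have h2 : x ≤ 1 := (abs_le.mp hx).2
  have := Real.cos_arccos h1 h2
  rw [← this, T_real_cos]
  exact Real.abs_cos_le_one _

lemma exists_cheb_poly (α β : ℝ) (hα : 0 < α) (hαβ : α ≤ β) (k : ℕ) :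
    ∃ s : ℝ[X], s.natDegree ≤ k ∧ s.eval 0 = 1 ∧
      ∀ y ∈ Set.Icc α β, |s.eval y| ≤
        2 * ((Real.sqrt β - Real.sqrt α)/(Real.sqrt β + Real.sqrt α))^k := by
  have hβ : 0 < β := lt_of_lt_of_le hα hαβ
  have hsα : 0 < Real.sqrt α := Real.sqrt_pos.mpr hα
  have hsβ : 0 < Real.sqrt β := Real.sqrt_pos.mpr hβ
  have hsαβ : Real.sqrt α ≤ Real.sqrt β := Real.sqrt_le_sqrt hαβ
  rcases eq_or_lt_of_le hαβ with heq | hlt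
  · -- α = β
    refine ⟨(1 - C α⁻¹ * X)^k, ?_, by simp, ?_⟩
    · apply le_trans (natDegree_pow_le)
      have h1 : (1 - C α⁻¹ * X : ℝ[X]).natDegree ≤ 1 := by
        apply le_trans (natDegree_sub_le _ _)
        simp only [natDegree_one, max_le_iff]
        exact ⟨Nat.zero_le 1, le_trans natDegree_mul_le (by simp)⟩
      calc k * (1 - C α⁻¹ * X : ℝ[X]).natDegree ≤ k * 1 := Nat.mul_le_mul_left k h1
        _ = k := mul_one k
    · intro y hy
      subst heq
      have hy' : y = α := le_antisymm hy.2 hy.1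
      subst hy'
      simp only [eval_pow, eval_sub, eval_one, eval_mul, eval_C, eval_X,
        inv_mul_cancel₀ (ne_of_gt hα), sub_self]
      rw [abs_pow, abs_zero]
      simp only [sub_self, zero_div]
      have h0 : (0:ℝ) ≤ (0:ℝ)^k := pow_nonneg le_rfl k
      linarith
  · -- α < β
    set sa := Real.sqrt α
    set sb := Real.sqrt β
    have hslt : sa < sb := Real.sqrt_lt_sqrt hα.le hlt
    have hden : 0 < sb - sa := by linarith
    have hsum : 0 < sb + sa := by linarith
    set z := (sb + sa) / (sb - sa) with hz_def
    have hz1 : 1 < z := by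
      rw [lt_div_iff₀ hden]; linarith
    have hz0 : 0 < z := by linarith
    have hzinv : z⁻¹ = (sb - sa) / (sb + sa) := by
      rw [hz_def, inv_div]
    have hsa2 : sa^2 = α := Real.sq_sqrt hα.le
    have hsb2 : sb^2 = β := Real.sq_sqrt hβ.le
    have hba : β - α > 0 := by linarith
    have hc : (z + z⁻¹)/2 = (α + β)/(β - α) := by
      have h1 : sb - sa ≠ 0 := ne_of_gt hden
      have h2 : sb + sa ≠ 0 := ne_of_gt hsum
      have h3 : sb^2 - sa^2 ≠ 0 := by nlinarith
      rw [hz_def, hzinv, ← hsa2, ← hsb2]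
      field_simp
      ring
    have hD := eval_T_half z (ne_of_gt hz0) k
    set c := (α + β)/(β - α) with hc_def
    rw [hc] at hD
    have hDpos : 0 < (T ℝ (k:ℤ)).eval c := by
      rw [hD]
      have : 0 < z^k := pow_pos hz0 k
      have : 0 < z⁻¹^k := pow_pos (inv_pos.mpr hz0) k
      positivity
    refine ⟨C ((T ℝ (k:ℤ)).eval c)⁻¹ * (T ℝ (k:ℤ)).comp (C c - C (2/(β-α)) * X), ?_, ?_, ?_⟩
    · apply le_trans natDegree_mul_le
      rw [natDegree_C, zero_add]
      apply le_trans (natDegree_comp_le)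
      have h1 : (C c - C (2/(β-α)) * X : ℝ[X]).natDegree ≤ 1 := by
        apply le_trans (natDegree_sub_le _ _)
        simp only [natDegree_C, max_le_iff]
        exact ⟨Nat.zero_le 1, le_trans natDegree_mul_le (by simp)⟩
      calc (T ℝ (k:ℤ)).natDegree * (C c - C (2/(β-α)) * X : ℝ[X]).natDegree
          ≤ k * 1 := Nat.mul_le_mul (natDegree_T_le k) h1
        _ = k := mul_one k
    · simp [eval_comp, inv_mul_cancel₀ (ne_of_gt hDpos)]
    · intro y hy
      have hw : |c - 2/(β-α)*y| ≤ 1 := by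
        have : c - 2/(β-α)*y = (α + β - 2*y)/(β - α) := by
          rw [hc_def]; field_simp
        rw [this, abs_div, abs_of_pos hba, div_le_one hba, abs_le]
        constructor <;> [skip; skip] <;> nlinarith [hy.1, hy.2]
      have hT := abs_eval_T_le k _ hw
      simp only [eval_mul, eval_C, eval_comp, eval_sub, eval_X, abs_mul]
      have hDinv : |((T ℝ (k:ℤ)).eval c)⁻¹| = ((T ℝ (k:ℤ)).eval c)⁻¹ :=
        abs_of_pos (inv_pos.mpr hDpos)
      rw [hDinv]
      have hbound : ((T ℝ (k:ℤ)).eval c)⁻¹ ≤ 2 * ((sb - sa)/(sb + sa))^k := by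
        rw [← hzinv]
        have h1 : z^k / 2 ≤ (T ℝ (k:ℤ)).eval c := by
          rw [hD]
          have : 0 < z⁻¹^k := pow_pos (inv_pos.mpr hz0) k
          linarith
        have h2 : 0 < z^k / 2 := by positivity
        calc ((T ℝ (k:ℤ)).eval c)⁻¹ ≤ (z^k/2)⁻¹ := by
              apply inv_anti₀ h2 h1
          _ = 2 * z⁻¹^k := by rw [inv_div, div_eq_mul_inv, ← inv_pow]
      calc ((T ℝ (k:ℤ)).eval c)⁻¹ * |(T ℝ (k:ℤ)).eval (c - 2/(β-α)*y)|
          ≤ ((T ℝ (k:ℤ)).eval c)⁻¹ * 1 := by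
            apply mul_le_mul_of_nonneg_left hT (le_of_lt (inv_pos.mpr hDpos))
        _ = ((T ℝ (k:ℤ)).eval c)⁻¹ := mul_one _
        _ ≤ 2 * ((sb - sa)/(sb + sa))^k := hbound

lemma aeval_mulVec {m : ℕ} (H : Matrix (Fin m) (Fin m) ℝ) (v : Fin m → ℝ) (lam : ℝ)
    (hv : H *ᵥ v = lam • v) (p : ℝ[X]) : (aeval H p) *ᵥ v = p.eval lam • v := by
  induction p using Polynomial.induction_on' with
  | add p q hp hq => simp [add_mulVec, hp, hq, add_smul]
  | monomial n c =>
    have hpow : ∀ n : ℕ, H ^ n *ᵥ v = lam ^ n • v := by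
      intro n
      induction n with
      | zero => simp
      | succ n ih =>
        rw [pow_succ, ← mulVec_mulVec, hv, mulVec_smul, ih, pow_succ]
        module
    simp [aeval_monomial, Algebra.algebraMap_eq_smul_one, smul_mulVec, ← mulVec_mulVec, hpow,
      smul_smul, mul_comm]

lemma spectralNorm_aeval_le {m : ℕ} (H : Matrix (Fin m) (Fin m) ℝ) (hH : H.IsHermitian)
    (p : ℝ[X]) (C : ℝ) (hC : 0 ≤ C) (h : ∀ i, |p.eval (hH.eigenvalues i)| ≤ C) :
    spectralNorm' (aeval H p) ≤ C := by
  set B := hH.eigenvectorBasis with hB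
  set L := LinearMap.toContinuousLinearMap (Matrix.toEuclideanLin (𝕜 := ℝ) (aeval H p)) with hL
  apply ContinuousLinearMap.opNorm_le_bound _ hC
  intro x
  have step1 : ∀ i, L (B i) = p.eval (hH.eigenvalues i) • B i := by
    intro i
    have h1 : (aeval H p) *ᵥ ⇑(B i) = p.eval (hH.eigenvalues i) • ⇑(B i) :=
      aeval_mulVec H _ _ (hH.mulVec_eigenvectorBasis i) p
    show Matrix.toEuclideanLin (aeval H p) (B i) = _
    rw [toEuclideanLin_apply]
    exact congrArg (WithLp.equiv 2 (Fin m → ℝ)).symm h1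
  have key : ∀ i, B.repr (L x) i = p.eval (hH.eigenvalues i) * B.repr x i := by
    intro i
    have horth := orthonormal_iff_ite.mp B.orthonormal
    conv_lhs => rw [B.repr_apply_apply, ← B.sum_repr x, map_sum]
    simp only [_root_.map_smul, step1, inner_sum, real_inner_smul_right, horth, mul_ite, mul_one,
      mul_zero, Finset.sum_ite_eq, Finset.mem_univ, if_true]
    ring
  calc ‖L x‖ = ‖B.repr (L x)‖ := (B.repr.norm_map (L x)).symm
    _ ≤ C * ‖B.repr x‖ := by
        rw [EuclideanSpace.norm_eq, EuclideanSpace.norm_eq]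
        rw [← Real.sqrt_sq hC, ← Real.sqrt_mul (sq_nonneg C)]
        apply Real.sqrt_le_sqrt
        rw [Finset.mul_sum]
        apply Finset.sum_le_sum
        intro i _
        rw [key i]
        simp only [Real.norm_eq_abs, abs_mul]
        rw [mul_pow]
        apply mul_le_mul_of_nonneg_right _ (by positivity)
        exact pow_le_pow_left₀ (abs_nonneg _) (h i) 2
    _ = C * ‖x‖ := by rw [B.repr.norm_map x]

end MinresAux

/-- Let `H` be symmetric with every eigenvalue in
`{λ₁} ∪ [1−b, 1−a] ∪ [a, b]`, where `1 < a ≤ b` and `λ₁ ≠ 0`. Then for every `k` there is a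
polynomial `p` of degree `≤ 2k+1` with `p(0) = 1` and
`‖p(H)‖ ≤ 2((b+|λ₁|)/|λ₁|)((√(b²−b) − √(a²−a))/(√(b²−b) + √(a²−a)))ᵏ`. -/
theorem minres_polynomial_bound {m : ℕ}
    (H : Matrix (Fin m) (Fin m) ℝ) (hH : H.IsHermitian)
    (a b lam₁ : ℝ) (ha : 1 < a) (hab : a ≤ b) (hlam₁ : lam₁ ≠ 0)
    (hspec : ∀ lam : ℝ, (∃ x : Fin m → ℝ, x ≠ 0 ∧ H *ᵥ x = lam • x) →
      lam ∈ ({lam₁} : Set ℝ) ∪ Set.Icc (1 - b) (1 - a) ∪ Set.Icc a b)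
    (k : ℕ) :
    ∃ p : Polynomial ℝ, p.natDegree ≤ 2 * k + 1 ∧ p.eval 0 = 1 ∧
      spectralNorm' ((Polynomial.aeval H) p) ≤
        2 * ((b + |lam₁|) / |lam₁|) *
          ((Real.sqrt (b ^ 2 - b) - Real.sqrt (a ^ 2 - a)) /
            (Real.sqrt (b ^ 2 - b) + Real.sqrt (a ^ 2 - a))) ^ k := by
  have hb : 1 < b := lt_of_lt_of_le ha hab
  have hα : (0:ℝ) < a^2 - a := by nlinarith
  have hαβ : a^2 - a ≤ b^2 - b := by nlinarith
  obtain ⟨s, hs_deg, hs0, hs_bound⟩ := MinresAux.exists_cheb_poly (a^2 - a) (b^2 - b) hα hαβ k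
  set ρ := (Real.sqrt (b^2 - b) - Real.sqrt (a^2 - a)) /
      (Real.sqrt (b^2 - b) + Real.sqrt (a^2 - a)) with hρ_def
  have hρ0 : 0 ≤ ρ := by
    apply div_nonneg
    · have := Real.sqrt_le_sqrt hαβ; linarith
    · have h1 : 0 < Real.sqrt (a^2-a) := Real.sqrt_pos.mpr hα
      have h2 : 0 ≤ Real.sqrt (b^2-b) := Real.sqrt_nonneg _
      linarith
  have habs : 0 < |lam₁| := abs_pos.mpr hlam₁
  set RHS := 2 * ((b + |lam₁|) / |lam₁|) * ρ^k with hRHS_def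
  have hRHS0 : 0 ≤ RHS := by
    have : 0 ≤ ρ^k := pow_nonneg hρ0 k
    have hb0 : (0:ℝ) < b := by linarith
    positivity
  set p := C lam₁⁻¹ * (C lam₁ - X) * s.comp (X^2 - X) with hp_def
  refine ⟨p, ?_, ?_, ?_⟩
  · -- degree
    apply le_trans natDegree_mul_le
    have h1 : (C lam₁⁻¹ * (C lam₁ - X) : ℝ[X]).natDegree ≤ 1 := by
      apply le_trans natDegree_mul_le
      rw [natDegree_C, zero_add]
      apply le_trans (natDegree_sub_le _ _)
      simp
    have h2 : (s.comp (X^2 - X)).natDegree ≤ 2 * k := by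
      apply le_trans natDegree_comp_le
      have h3 : (X^2 - X : ℝ[X]).natDegree ≤ 2 := by
        apply le_trans (natDegree_sub_le _ _)
        simp
      calc s.natDegree * (X^2 - X : ℝ[X]).natDegree ≤ k * 2 := Nat.mul_le_mul hs_deg h3
        _ = 2 * k := Nat.mul_comm k 2
    omega
  · -- eval 0
    simp [hp_def, eval_comp, hs0, inv_mul_cancel₀ hlam₁]
  · -- norm bound
    apply MinresAux.spectralNorm_aeval_le H hH p RHS hRHS0
    intro i
    have hmem := hspec (hH.eigenvalues i) ⟨⇑(hH.eigenvectorBasis i), by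
      intro hzero
      have h1 : ‖hH.eigenvectorBasis i‖ = 1 := hH.eigenvectorBasis.orthonormal.1 i
      rw [show hH.eigenvectorBasis i = 0 from by simpa using congrArg (WithLp.toLp 2) hzero] at h1
      simp at h1, hH.mulVec_eigenvectorBasis i⟩
    set lam := hH.eigenvalues i
    have hps : ∀ x : ℝ, p.eval x = lam₁⁻¹ * (lam₁ - x) * s.eval (x^2 - x) := by
      intro x; simp [hp_def, eval_comp]
    rcases hmem with (hmem | hmem) | hmem
    · -- lam = lam₁
      rw [Set.mem_singleton_iff] at hmem
      rw [hps, hmem]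
      simp [hRHS0]
    · -- lam ∈ [1-b, 1-a]
      obtain ⟨h1, h2⟩ := hmem
      have hy : lam^2 - lam ∈ Set.Icc (a^2-a) (b^2-b) := by
        constructor
        · nlinarith [mul_nonneg (by linarith : (0:ℝ) ≤ a - lam) (by linarith : (0:ℝ) ≤ 1 - a - lam)]
        · nlinarith [mul_nonneg (by linarith : (0:ℝ) ≤ b - lam) (by linarith : (0:ℝ) ≤ b + lam - 1)]
      have hs_le := hs_bound _ hy
      have hlam_abs : |lam| ≤ b := by
        rw [abs_le]; constructor <;> linarith
      rw [hps, abs_mul, abs_mul, abs_inv]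
      have h3 : |lam₁ - lam| ≤ |lam₁| + b :=
        le_trans (abs_sub _ _) (by linarith)
      calc |lam₁|⁻¹ * |lam₁ - lam| * |s.eval (lam^2 - lam)|
          ≤ |lam₁|⁻¹ * (|lam₁| + b) * (2 * ρ^k) := by
            apply mul_le_mul
            · apply mul_le_mul_of_nonneg_left h3 (by positivity)
            · exact hs_le
            · exact abs_nonneg _
            · positivity
        _ = RHS := by
            rw [hRHS_def]
            field_simp
            ring
    · -- lam ∈ [a, b]
      obtain ⟨h1, h2⟩ := hmem
      have hy : lam^2 - lam ∈ Set.Icc (a^2-a) (b^2-b) := by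
        constructor
        · nlinarith [mul_nonneg (by linarith : (0:ℝ) ≤ lam - a) (by linarith : (0:ℝ) ≤ lam + a - 1)]
        · nlinarith [mul_nonneg (by linarith : (0:ℝ) ≤ b - lam) (by linarith : (0:ℝ) ≤ b + lam - 1)]
      have hs_le := hs_bound _ hy
      have hlam_abs : |lam| ≤ b := by
        rw [abs_le]; constructor <;> linarith
      rw [hps, abs_mul, abs_mul, abs_inv]
      have h3 : |lam₁ - lam| ≤ |lam₁| + b :=
        le_trans (abs_sub _ _) (by linarith)
      calc |lam₁|⁻¹ * |lam₁ - lam| * |s.eval (lam^2 - lam)|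
          ≤ |lam₁|⁻¹ * (|lam₁| + b) * (2 * ρ^k) := by
            apply mul_le_mul
            · apply mul_le_mul_of_nonneg_left h3 (by positivity)
            · exact hs_le
            · exact abs_nonneg _
            · positivity
        _ = RHS := by
            rw [hRHS_def]
            field_simp
            ring
end

section
/- Let H be a symmetric real m×m matrix, let λ₁, a, b be real numbers with 0 < λ₁ < a ≤ b, and assume every eigenvalue of H lies in the set {λ₁} ∪ [a, b]. Then for every natural number k ≥ 2 there exists a real polynomial p with deg p ≤ k−1 and p(0) = 1 such that ‖p(H)‖ ≤ 2·((b − λ₁)/λ₁)·((√b − √a)/(√b + √a))^(k−2), where ‖·‖ is the spectral norm and p(H) denotes the evaluation of p at the matrix H. -/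
open Matrix Polynomial

section Cheb

lemma natDegree_T_le (n : ℕ) : (Chebyshev.T ℝ (n:ℤ)).natDegree ≤ n := by
  induction n using Nat.strong_induction_on with
  | _ n ih =>
    match n with
    | 0 => simp [Chebyshev.T_zero]
    | 1 => simp [Chebyshev.T_one]
    | (n+2) =>
      have h := Chebyshev.T_add_two ℝ (n:ℤ)
      have : ((n:ℤ)+2) = ((n+2 : ℕ) : ℤ) := by push_cast; ring
      rw [this] at h
      rw [h]
      refine le_trans (natDegree_sub_le _ _) ?_
      have h1 : (2 * X * Chebyshev.T ℝ ((n:ℤ)+1)).natDegree ≤ n + 2 := by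
        refine le_trans (natDegree_mul_le) ?_
        have : ((n:ℤ)+1) = ((n+1 : ℕ) : ℤ) := by push_cast; ring
        rw [this]
        have := ih (n+1) (by omega)
        have h2X : (2 * X : ℝ[X]).natDegree ≤ 1 :=
          le_trans natDegree_mul_le (by simp)
        omega
      have h2 := ih n (by omega)
      simp only [max_le_iff]
      exact ⟨h1, by omega⟩

lemma T_eval_formula (x : ℝ) (hx : 1 ≤ x) (n : ℕ) :
    (Chebyshev.T ℝ (n:ℤ)).eval x =
      ((x + Real.sqrt (x^2-1))^n + (x - Real.sqrt (x^2-1))^n) / 2 := by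
  set d := Real.sqrt (x^2-1) with hd
  have hd2 : d^2 = x^2 - 1 := Real.sq_sqrt (by nlinarith)
  have key : ∀ n : ℕ, (Chebyshev.T ℝ (n:ℤ)).eval x = ((x+d)^n + (x-d)^n)/2 ∧
      (Chebyshev.T ℝ ((n:ℤ)+1)).eval x = ((x+d)^(n+1) + (x-d)^(n+1))/2 := by
    intro n
    induction n with
    | zero => constructor <;> simp [Chebyshev.T_zero, Chebyshev.T_one] <;> ring
    | succ n ih =>
      refine ⟨by exact_mod_cast ih.2, ?_⟩
      have h := Chebyshev.T_add_two ℝ (n:ℤ)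
      have hc : ((n:ℤ)+2) = ((n+1 : ℕ) : ℤ) + 1 := by push_cast; ring
      rw [← hc, h]
      simp only [eval_sub, eval_mul, eval_ofNat, eval_X, ih.1, ih.2]
      have hu : (x+d)^(n+2) = 2*x*(x+d)^(n+1) - (x+d)^n := by
        have h2 : (x+d)^2 = 2*x*(x+d) - 1 := by nlinarith
        calc (x+d)^(n+2) = (x+d)^n * (x+d)^2 := by ring
          _ = (x+d)^n * (2*x*(x+d) - 1) := by rw [h2]
          _ = 2*x*(x+d)^(n+1) - (x+d)^n := by ring
      have hv : (x-d)^(n+2) = 2*x*(x-d)^(n+1) - (x-d)^n := by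
        have h2 : (x-d)^2 = 2*x*(x-d) - 1 := by nlinarith
        calc (x-d)^(n+2) = (x-d)^n * (x-d)^2 := by ring
          _ = (x-d)^n * (2*x*(x-d) - 1) := by rw [h2]
          _ = 2*x*(x-d)^(n+1) - (x-d)^n := by ring
      push_cast
      rw [hu, hv]
      ring
  exact (key n).1

lemma T_eval_ge (x : ℝ) (hx : 1 < x) (n : ℕ) :
    (x + Real.sqrt (x^2-1))^n / 2 ≤ (Chebyshev.T ℝ (n:ℤ)).eval x := by
  rw [T_eval_formula x hx.le n]
  have h1 : 0 ≤ x - Real.sqrt (x^2-1) := by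
    have h2 : Real.sqrt (x^2-1) ≤ Real.sqrt (x^2) := Real.sqrt_le_sqrt (by nlinarith)
    rw [Real.sqrt_sq (by linarith)] at h2
    linarith
  have := pow_nonneg h1 n
  linarith

lemma T_abs_le (x : ℝ) (hx : x ∈ Set.Icc (-1:ℝ) 1) (n : ℕ) :
    |(Chebyshev.T ℝ (n:ℤ)).eval x| ≤ 1 := by
  rw [← Real.cos_arccos hx.1 hx.2, Chebyshev.T_real_cos]
  exact Real.abs_cos_le_one _

end Cheb

section NormLemma

lemma toEuclideanLin_mul {m : ℕ} (A B : Matrix (Fin m) (Fin m) ℝ) :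
    Matrix.toEuclideanLin (𝕜 := ℝ) (A * B) =
      Matrix.toEuclideanLin (𝕜 := ℝ) A * Matrix.toEuclideanLin (𝕜 := ℝ) B := by
  ext x
  simp [Matrix.toEuclideanLin_apply, Matrix.mulVec_mulVec]

lemma toEuclideanLin_one {m : ℕ} :
    Matrix.toEuclideanLin (𝕜 := ℝ) (1 : Matrix (Fin m) (Fin m) ℝ) = 1 := by
  ext x
  simp [Matrix.toEuclideanLin_apply]

lemma toEuclideanLin_pow {m : ℕ} (A : Matrix (Fin m) (Fin m) ℝ) (n : ℕ) :
    Matrix.toEuclideanLin (𝕜 := ℝ) (A ^ n) = (Matrix.toEuclideanLin (𝕜 := ℝ) A) ^ n := by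
  induction n with
  | zero => simpa using toEuclideanLin_one
  | succ n ih => rw [pow_succ, pow_succ, toEuclideanLin_mul, ih]

lemma toEuclideanLin_aeval {m : ℕ} (H : Matrix (Fin m) (Fin m) ℝ) (p : ℝ[X]) :
    Matrix.toEuclideanLin (𝕜 := ℝ) ((aeval H) p) =
      (aeval (Matrix.toEuclideanLin (𝕜 := ℝ) H)) p := by
  induction p using Polynomial.induction_on' with
  | add p q hp hq => rw [map_add, map_add, hp, hq, map_add]
  | monomial n c =>
    rw [aeval_monomial, aeval_monomial, Algebra.algebraMap_eq_smul_one,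
      Algebra.algebraMap_eq_smul_one, smul_mul_assoc, smul_mul_assoc, _root_.map_smul,
      one_mul, one_mul, toEuclideanLin_pow]

lemma spectralNorm_aeval_le {m : ℕ} (H : Matrix (Fin m) (Fin m) ℝ) (hH : H.IsHermitian)
    (p : ℝ[X]) (C : ℝ) (hC : 0 ≤ C)
    (h : ∀ lam : ℝ, (∃ x : Fin m → ℝ, x ≠ 0 ∧ H *ᵥ x = lam • x) → |p.eval lam| ≤ C) :
    spectralNorm' ((aeval H) p) ≤ C := by
  set T0 := Matrix.toEuclideanLin (𝕜 := ℝ) H with hT0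
  have hsym : T0.IsSymmetric := Matrix.isHermitian_iff_isSymmetric.mp hH
  have hn : Module.finrank ℝ (EuclideanSpace ℝ (Fin m)) = m := finrank_euclideanSpace_fin
  set b := hsym.eigenvectorBasis hn with hb
  set μ := hsym.eigenvalues hn with hμ
  have heig : ∀ i, T0 (b i) = μ i • b i := fun i =>
    (hsym.hasEigenvector_eigenvectorBasis hn i).apply_eq_smul
  have hbnd : ∀ i, |p.eval (μ i)| ≤ C := by
    intro i
    apply h
    refine ⟨(WithLp.equiv 2 _) (b i), ?_, ?_⟩
    · simpa using (hsym.hasEigenvector_eigenvectorBasis hn i).2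
    · have := congrArg (WithLp.equiv 2 (Fin m → ℝ)) (heig i)
      simpa [hT0, Matrix.ofLp_toEuclideanLin_apply] using this
  have haeval : ∀ i, (aeval T0 p) (b i) = p.eval (μ i) • b i := fun i =>
    Module.End.aeval_apply_of_hasEigenvector (hsym.hasEigenvector_eigenvectorBasis hn i)
  rw [spectralNorm', toEuclideanLin_aeval, ← hT0]
  refine ContinuousLinearMap.opNorm_le_bound _ hC (fun x => ?_)
  simp only [LinearMap.coe_toContinuousLinearMap']
  set S := aeval T0 p with hS
  have hSx : S x = ∑ i, (p.eval (μ i) * b.repr x i) • b i := by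
    conv_lhs => rw [← b.sum_repr x, map_sum]
    refine Finset.sum_congr rfl (fun i _ => ?_)
    rw [_root_.map_smul, haeval i, smul_smul, mul_comm]
  have hrep : ∀ j, b.repr (S x) j = p.eval (μ j) * b.repr x j := by
    intro j
    rw [hSx, map_sum]
    simp only [_root_.map_smul, OrthonormalBasis.repr_self]
    rw [WithLp.ofLp_sum, Finset.sum_apply]
    simp only [PiLp.smul_apply, EuclideanSpace.single_apply, smul_eq_mul,
      mul_ite, mul_one, mul_zero]
    simp [Finset.sum_ite_eq]
  have hx2 : ‖x‖ ^ 2 = ∑ j, (b.repr x j) ^ 2 := by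
    rw [← b.repr.norm_map x, EuclideanSpace.norm_eq, Real.sq_sqrt (by positivity)]
    simp [sq_abs]
  have hSx2 : ‖S x‖ ^ 2 = ∑ j, (p.eval (μ j) * b.repr x j) ^ 2 := by
    rw [← b.repr.norm_map (S x), EuclideanSpace.norm_eq, Real.sq_sqrt (by positivity)]
    simp [hrep, mul_pow, sq_abs]
  have hle : ‖S x‖ ^ 2 ≤ (C * ‖x‖) ^ 2 := by
    rw [hSx2, mul_pow, hx2, Finset.mul_sum]
    refine Finset.sum_le_sum (fun j _ => ?_)
    rw [mul_pow]
    have := hbnd j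
    have h2 : (p.eval (μ j)) ^ 2 ≤ C ^ 2 := by
      rw [← sq_abs]
      exact pow_le_pow_left₀ (abs_nonneg _) this 2
    nlinarith [sq_nonneg (b.repr x j)]
  have := Real.sqrt_le_sqrt hle
  rwa [Real.sqrt_sq (norm_nonneg _), Real.sqrt_sq (by positivity)] at this

end NormLemma

lemma natDegree_one_sub_C_mul_X_le (c d : ℝ) : (C d - C c * X : ℝ[X]).natDegree ≤ 1 := by
  refine le_trans (natDegree_sub_le _ _) ?_
  simp only [max_le_iff, natDegree_C]
  exact ⟨by omega, le_trans natDegree_mul_le (by simp)⟩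

set_option maxHeartbeats 1000000 in
/-- Let `H` be symmetric with every eigenvalue in `{λ₁} ∪ [a, b]`, where
`0 < λ₁ < a ≤ b`. Then for every `k ≥ 2` there is a polynomial `p` of degree `≤ k−1` with
`p(0) = 1` and `‖p(H)‖ ≤ 2((b−λ₁)/λ₁)((√b − √a)/(√b + √a))^(k−2)`. -/
theorem gmres_polynomial_bound {m : ℕ}
    (H : Matrix (Fin m) (Fin m) ℝ) (hH : H.IsHermitian)
    (lam₁ a b : ℝ) (hlam₁ : 0 < lam₁) (hla : lam₁ < a) (hab : a ≤ b)
    (hspec : ∀ lam : ℝ, (∃ x : Fin m → ℝ, x ≠ 0 ∧ H *ᵥ x = lam • x) →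
      lam ∈ ({lam₁} : Set ℝ) ∪ Set.Icc a b)
    (k : ℕ) (hk : 2 ≤ k) :
    ∃ p : Polynomial ℝ, p.natDegree ≤ k - 1 ∧ p.eval 0 = 1 ∧
      spectralNorm' ((Polynomial.aeval H) p) ≤
        2 * ((b - lam₁) / lam₁) *
          ((Real.sqrt b - Real.sqrt a) / (Real.sqrt b + Real.sqrt a)) ^ (k - 2) := by
  have ha : 0 < a := lt_trans hlam₁ hla
  have hb : 0 < b := lt_of_lt_of_le ha hab
  set sa := Real.sqrt a with hsa
  set sb := Real.sqrt b with hsb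
  have hsa2 : sa ^ 2 = a := Real.sq_sqrt ha.le
  have hsb2 : sb ^ 2 = b := Real.sq_sqrt hb.le
  have hsapos : 0 < sa := Real.sqrt_pos.mpr ha
  have hsbpos : 0 < sb := Real.sqrt_pos.mpr hb
  have hsab : sa ≤ sb := Real.sqrt_le_sqrt hab
  set ρ := (sb - sa) / (sb + sa) with hρ
  have hρ0 : 0 ≤ ρ := div_nonneg (by linarith) (by linarith)
  have hfac : (0:ℝ) ≤ 2 * ((b - lam₁) / lam₁) := by
    have : 0 ≤ (b - lam₁) / lam₁ := div_nonneg (by linarith) hlam₁.le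
    linarith
  have hRHS0 : 0 ≤ 2 * ((b - lam₁) / lam₁) * ρ ^ (k - 2) :=
    mul_nonneg hfac (pow_nonneg hρ0 _)
  rcases eq_or_lt_of_le hk with hk2 | hk3
  · -- k = 2
    refine ⟨1 - C lam₁⁻¹ * X, ?_, by simp, ?_⟩
    · have h1 : (1 - C lam₁⁻¹ * X : ℝ[X]).natDegree ≤ 1 := by
        simpa using natDegree_one_sub_C_mul_X_le lam₁⁻¹ 1
      omega
    · apply spectralNorm_aeval_le H hH _ _ hRHS0
      intro lam hex
      rcases hspec lam hex with h1 | h2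
      · rw [Set.mem_singleton_iff] at h1
        subst h1
        simp only [eval_sub, eval_one, eval_mul, eval_C, eval_X,
          inv_mul_cancel₀ hlam₁.ne', sub_self, abs_zero]
        exact hRHS0
      · rw [Set.mem_Icc] at h2
        have hks : k - 2 = 0 := by omega
        rw [hks, pow_zero, mul_one]
        simp only [eval_sub, eval_one, eval_mul, eval_C, eval_X]
        have h1 : 1 - lam₁⁻¹ * lam = (lam₁ - lam) / lam₁ := by field_simp
        rw [h1, abs_div, abs_of_pos hlam₁, abs_of_nonpos (by nlinarith [h2.1]), div_le_iff₀ hlam₁]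
        have h3 : 2 * ((b - lam₁) / lam₁) * lam₁ = 2 * (b - lam₁) := by field_simp
        rw [h3]
        nlinarith [h2.2]
  · rcases eq_or_lt_of_le hab with hab' | hab'
    · -- k ≥ 3, a = b : RHS = 0
      refine ⟨(1 - C lam₁⁻¹ * X) * (1 - C a⁻¹ * X), ?_, by simp, ?_⟩
      · refine le_trans natDegree_mul_le ?_
        have h1 : (1 - C lam₁⁻¹ * X : ℝ[X]).natDegree ≤ 1 := by
          simpa using natDegree_one_sub_C_mul_X_le lam₁⁻¹ 1
        have h2 : (1 - C a⁻¹ * X : ℝ[X]).natDegree ≤ 1 := by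
          simpa using natDegree_one_sub_C_mul_X_le a⁻¹ 1
        omega
      · have hρz : ρ = 0 := by rw [hρ, hsa, hsb, ← hab', sub_self, zero_div]
        rw [hρz, zero_pow (by omega : k - 2 ≠ 0), mul_zero]
        apply spectralNorm_aeval_le H hH _ _ le_rfl
        intro lam hex
        rcases hspec lam hex with h1 | h2
        · rw [Set.mem_singleton_iff] at h1
          subst h1
          simp [inv_mul_cancel₀ hlam₁.ne']
        · rw [Set.mem_Icc] at h2
          have hlab : lam = a := le_antisymm (h2.2.trans hab'.ge) h2.1
          subst hlab
          simp [inv_mul_cancel₀ ha.ne']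
    · -- a < b
      have hδ : 0 < b - a := by linarith
      have hsab' : sa < sb := by
        have := Real.sqrt_lt_sqrt ha.le hab'
        rwa [← hsa, ← hsb] at this
      have hρpos : 0 < ρ := div_pos (by linarith) (by linarith)
      set n := k - 2 with hn
      set γ := (a + b) / (b - a) with hγdef
      have hγ : 1 < γ := by
        rw [hγdef, lt_div_iff₀ hδ]
        linarith
      have hγd : Real.sqrt (γ^2 - 1) = 2 * sa * sb / (b - a) := by
        have h1 : γ^2 - 1 = (2 * sa * sb / (b - a))^2 := by
          rw [hγdef, ← hsa2, ← hsb2]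
          have hδ' : sb^2 - sa^2 ≠ 0 := by nlinarith
          field_simp
          ring
        rw [h1, Real.sqrt_sq (div_nonneg (by positivity) hδ.le)]
      have hu : γ + Real.sqrt (γ^2 - 1) = ρ⁻¹ := by
        rw [hγd, hγdef, hρ, ← hsa2, ← hsb2, inv_div]
        have hδ' : sb^2 - sa^2 ≠ 0 := by nlinarith
        have h2' : sb + sa ≠ 0 := by nlinarith
        have h3' : sb - sa ≠ 0 := by nlinarith
        field_simp
        ring
      set τ := (Chebyshev.T ℝ (n:ℤ)).eval γ with hτdef
      have hτge : ρ⁻¹ ^ n / 2 ≤ τ := by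
        have := T_eval_ge γ hγ n
        rwa [hu] at this
      have hτpos : 0 < τ := lt_of_lt_of_le (by positivity) hτge
      have hτinv : τ⁻¹ ≤ 2 * ρ ^ n := by
        have h1 : (2 * ρ ^ n)⁻¹ ≤ τ := by
          rw [mul_inv, ← inv_pow]
          calc (2:ℝ)⁻¹ * (ρ⁻¹)^n = ρ⁻¹ ^ n / 2 := by ring
            _ ≤ τ := hτge
        calc τ⁻¹ ≤ ((2 * ρ ^ n)⁻¹)⁻¹ := by
              apply inv_anti₀ (by positivity) h1
          _ = 2 * ρ ^ n := by rw [inv_inv]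
      set L : ℝ[X] := C γ - C (2/(b-a)) * X with hL
      set q : ℝ[X] := C τ⁻¹ * ((Chebyshev.T ℝ (n:ℤ)).comp L) with hq
      refine ⟨(1 - C lam₁⁻¹ * X) * q, ?_, ?_, ?_⟩
      · refine le_trans natDegree_mul_le ?_
        have h1 : (1 - C lam₁⁻¹ * X : ℝ[X]).natDegree ≤ 1 := by
          simpa using natDegree_one_sub_C_mul_X_le lam₁⁻¹ 1
        have hkn : n + 1 ≤ k - 1 := by omega
        have h2 : q.natDegree ≤ n := by
          rw [hq]
          refine le_trans natDegree_mul_le ?_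
          have h3 : ((Chebyshev.T ℝ (n:ℤ)).comp L).natDegree ≤ n := by
            refine le_trans natDegree_comp_le ?_
            have := natDegree_T_le n
            have := natDegree_one_sub_C_mul_X_le (2/(b-a)) γ
            have h4 : L.natDegree ≤ 1 := by
              rw [hL]; exact natDegree_one_sub_C_mul_X_le _ _
            calc (Chebyshev.T ℝ (n:ℤ)).natDegree * L.natDegree ≤ n * 1 :=
              Nat.mul_le_mul (natDegree_T_le n) h4
            _ = n := by omega
          simpa using h3
        omega
      · rw [hq]
        simp only [eval_mul, eval_sub, eval_one, eval_C, eval_X, eval_comp, hL]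
        rw [show γ - 2 / (b - a) * 0 = γ by ring, ← hτdef, inv_mul_cancel₀ hτpos.ne']
        ring

      · apply spectralNorm_aeval_le H hH _ _ hRHS0
        intro lam hex
        rcases hspec lam hex with h1 | h2
        · rw [Set.mem_singleton_iff] at h1
          subst h1
          rw [eval_mul]
          simp only [eval_sub, eval_one, eval_mul, eval_C, eval_X,
            inv_mul_cancel₀ hlam₁.ne', sub_self, zero_mul, abs_zero]
          exact hRHS0
        · rw [Set.mem_Icc] at h2
          rw [eval_mul, abs_mul]
          have hf1 : |(1 - C lam₁⁻¹ * X : ℝ[X]).eval lam| ≤ (b - lam₁) / lam₁ := by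
            simp only [eval_sub, eval_one, eval_mul, eval_C, eval_X]
            have h1 : 1 - lam₁⁻¹ * lam = (lam₁ - lam) / lam₁ := by field_simp
            rw [h1, abs_div, abs_of_pos hlam₁, abs_of_nonpos (by linarith)]
            rw [div_le_div_iff₀ hlam₁ hlam₁]
            nlinarith [h2.2]
          have hf2 : |q.eval lam| ≤ 2 * ρ ^ n := by
            rw [hq]
            simp only [eval_mul, eval_C, eval_comp]
            rw [abs_mul, abs_of_pos (inv_pos.mpr hτpos)]
            have hmem : L.eval lam ∈ Set.Icc (-1:ℝ) 1 := by
              rw [hL]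
              simp only [eval_sub, eval_C, eval_mul, eval_X]
              have heq : γ - 2/(b-a) * lam = (a + b - 2*lam) / (b - a) := by
                rw [hγdef]; field_simp
              rw [heq]
              constructor
              · rw [le_div_iff₀ hδ]; nlinarith [h2.2]
              · rw [div_le_one hδ]; nlinarith [h2.1]
            have hT := T_abs_le (L.eval lam) hmem n
            calc τ⁻¹ * |(Chebyshev.T ℝ (n:ℤ)).eval (L.eval lam)| ≤ τ⁻¹ * 1 :=
              mul_le_mul_of_nonneg_left hT (inv_pos.mpr hτpos).le
            _ = τ⁻¹ := mul_one _
            _ ≤ 2 * ρ ^ n := hτinv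
          calc |(1 - C lam₁⁻¹ * X : ℝ[X]).eval lam| * |q.eval lam|
              ≤ ((b - lam₁) / lam₁) * (2 * ρ ^ n) := by
                apply mul_le_mul hf1 hf2 (abs_nonneg _)
                exact div_nonneg (by linarith) hlam₁.le
            _ = 2 * ((b - lam₁) / lam₁) * ρ ^ n := by ring
end

section
/- Let n and N be positive integers, let G be a real n×N matrix, let Y be a real N×N matrix, and let T = [[Iₙ, G],[0, Y]] be the block upper triangular (n+N)×(n+N) matrix with identity (1,1) block. Then for every real polynomial p, (I − T)·p(T) = [[0, −G·p(Y)],[0, (I − Y)·p(Y)]], where p(T) and p(Y) denote the evaluations of p at the matrices T and Y, and I denotes the identity matrix of the appropriate size. -/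
open Matrix Polynomial

theorem aeval_fromBlocks_zero₂₁ {R α m n : Type*} [CommSemiring R] [Semiring α] [Algebra R α]
    [Fintype m] [Fintype n] [DecidableEq m] [DecidableEq n]
    (A : Matrix m m α) (B : Matrix m n α) (D : Matrix n n α) (p : R[X]) :
    ∃ B' : Matrix m n α,
      aeval (fromBlocks A B 0 D) p = fromBlocks (aeval A p) B' 0 (aeval D p) := by
  induction p using Polynomial.induction_on with
  | C a =>
    refine ⟨0, ?_⟩
    simp only [aeval_C, algebraMap_eq_diagonal, fromBlocks_diagonal]
    congr 1
    ext (i | i) <;> rfl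
  | add p q hp hq =>
    obtain ⟨B₁, h₁⟩ := hp
    obtain ⟨B₂, h₂⟩ := hq
    exact ⟨B₁ + B₂, by simp only [map_add, h₁, h₂, fromBlocks_add, add_zero]⟩
  | monomial k a ih =>
    obtain ⟨B', h⟩ := ih
    refine ⟨aeval A (C a * X ^ k) * B + B' * D, ?_⟩
    simp only [pow_succ, ← mul_assoc, map_mul (aeval _) _ X, h, aeval_X, fromBlocks_multiply]
    simp

/-- For the block upper triangular matrix `T = [[Iₙ, G],[0, Y]]` and any
real polynomial `p`, one has `(I − T)·p(T) = [[0, −G·p(Y)],[0, (I − Y)·p(Y)]]`. -/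
theorem block_triangular_polynomial_identity {n N : ℕ}
    (G : Matrix (Fin n) (Fin N) ℝ) (Y : Matrix (Fin N) (Fin N) ℝ)
    (T : Matrix (Fin n ⊕ Fin N) (Fin n ⊕ Fin N) ℝ)
    (hT : T = Matrix.fromBlocks 1 G 0 Y)
    (p : Polynomial ℝ) :
    (1 - T) * (Polynomial.aeval T) p =
      Matrix.fromBlocks 0 (-(G * (Polynomial.aeval Y) p)) 0
        ((1 - Y) * (Polynomial.aeval Y) p) := by
  obtain ⟨B', hpT⟩ := aeval_fromBlocks_zero₂₁ 1 G Y p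
  -- the first block column of `1 - T` vanishes, so the unknown top row `[p(1), B']` of `p(T)` drops out
  have hIT : 1 - T = fromBlocks 0 (-G) 0 (1 - Y) := by
    rw [hT, ← fromBlocks_one, sub_eq_add_neg, fromBlocks_neg, fromBlocks_add]
    simp [sub_eq_add_neg]
  rw [hIT, hT, hpT, fromBlocks_multiply]
  simp
end
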